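/- arXiv:2605.05877 — 6 statements merged into one kernel-verified Lean document; each statement's English description precedes it below -/
import Mathlib

section
/- Let Ω be a finite set and let c : Ω × Ω → ℝ be symmetric, nonnegative, vanish on the diagonal, and have connected positivity graph E = {{x,y} : c(x,y) > 0}. Let D : Ω → ℝ satisfy Σ_{x∈Ω} D(x) = 0. Call ψ : Ω → ℝ an admissible potential if D(x) + Σ_{y∈Ω} (ψ(y) − ψ(x))·c(x,y) = 0 for every x ∈ Ω, and call J : Ω × Ω → ℝ an admissible flux if J is antisymmetric (J(x,y) = −J(y,x)), J(x,y) = 0 whenever c(x,y) = 0, and D(x) + Σ_{y∈Ω} J(x,y) = 0 for every x ∈ Ω. Then admissible potentials and admissible fluxes exist, both minima below are attained, and min over admissible potentials ψ of (1/2)·Σ_{x,y∈Ω} (ψ(x) − ψ(y))²·c(x,y) equals min over admissible fluxes J of (1/2)·Σ_{x,y : c(x,y)>0} J(x,y)²/c(x,y). -/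
open Finset

/-- The positivity graph of a symmetric capacity function `c`: an edge between `x ≠ y`
whenever `c x y > 0` (stated symmetrically so that the graph is well-defined). -/
def posGraph {Ω : Type*} (c : Ω → Ω → ℝ) : SimpleGraph Ω where
  Adj x y := x ≠ y ∧ 0 < c x y ∧ 0 < c y x
  symm := ⟨fun x y h => ⟨h.1.symm, h.2.2, h.2.1⟩⟩
  loopless := ⟨fun x h => h.1 rfl⟩

/-- Summation-by-parts identity for a symmetric kernel. -/
lemma lemA {Ω : Type*} [Fintype Ω] (c : Ω → Ω → ℝ) (hsymm : ∀ x y, c x y = c y x)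
    (a b : Ω → ℝ) :
    ∑ x, ∑ y, (a x - a y) * (b x - b y) * c x y
      = 2 * ∑ x, b x * ∑ y, (a x - a y) * c x y := by
  have key : ∑ x, ∑ y, (a x - a y) * b y * c x y
      = - ∑ x, ∑ y, (a x - a y) * b x * c x y := by
    rw [Finset.sum_comm, ← Finset.sum_neg_distrib]
    refine Finset.sum_congr rfl fun u _ => ?_
    rw [← Finset.sum_neg_distrib]
    refine Finset.sum_congr rfl fun v _ => ?_
    rw [hsymm v u]
    ring
  have expand : ∑ x, ∑ y, (a x - a y) * (b x - b y) * c x y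
      = (∑ x, ∑ y, (a x - a y) * b x * c x y)
        - ∑ x, ∑ y, (a x - a y) * b y * c x y := by
    rw [← Finset.sum_sub_distrib]
    refine Finset.sum_congr rfl fun x _ => ?_
    rw [← Finset.sum_sub_distrib]
    exact Finset.sum_congr rfl fun y _ => by ring
  have rhs : ∑ x, b x * ∑ y, (a x - a y) * c x y
      = ∑ x, ∑ y, (a x - a y) * b x * c x y := by
    refine Finset.sum_congr rfl fun x _ => ?_
    rw [Finset.mul_sum]
    exact Finset.sum_congr rfl fun y _ => by ring
  rw [expand, key, rhs]; ring

/-- Pairing of an antisymmetric flux with a gradient. -/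
lemma lemB {Ω : Type*} [Fintype Ω] (J : Ω → Ω → ℝ) (hanti : ∀ x y, J x y = - J y x)
    (φ : Ω → ℝ) :
    ∑ x, ∑ y, J x y * (φ y - φ x) = -2 * ∑ x, φ x * ∑ y, J x y := by
  have key : ∑ x, ∑ y, J x y * φ y = - ∑ x, ∑ y, J x y * φ x := by
    rw [Finset.sum_comm, ← Finset.sum_neg_distrib]
    refine Finset.sum_congr rfl fun u _ => ?_
    rw [← Finset.sum_neg_distrib]
    refine Finset.sum_congr rfl fun v _ => ?_
    rw [hanti v u]
    ring
  have expand : ∑ x, ∑ y, J x y * (φ y - φ x)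
      = (∑ x, ∑ y, J x y * φ y) - ∑ x, ∑ y, J x y * φ x := by
    rw [← Finset.sum_sub_distrib]
    refine Finset.sum_congr rfl fun x _ => ?_
    rw [← Finset.sum_sub_distrib]
    exact Finset.sum_congr rfl fun y _ => by ring
  have rhs : ∑ x, φ x * ∑ y, J x y = ∑ x, ∑ y, J x y * φ x := by
    refine Finset.sum_congr rfl fun x _ => ?_
    rw [Finset.mul_sum]
    exact Finset.sum_congr rfl fun y _ => by ring
  rw [expand, key, rhs]; ring

/-- Existence of a potential solving the discrete Poisson equation. -/
lemma exists_potential {Ω : Type*} [Fintype Ω] (c : Ω → Ω → ℝ)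
    (hsymm : ∀ x y, c x y = c y x) (hnonneg : ∀ x y, 0 ≤ c x y)
    (hconn : (posGraph c).Connected)
    (D : Ω → ℝ) (hD : ∑ x, D x = 0) :
    ∃ ψ : Ω → ℝ, ∀ x, D x = ∑ y, (ψ x - ψ y) * c x y := by
  classical
  have hne : Nonempty Ω := hconn.nonempty
  obtain ⟨x0⟩ := hne
  let L : (Ω → ℝ) →ₗ[ℝ] (Ω → ℝ) :=
  { toFun := fun ψ x => ∑ y, (ψ x - ψ y) * c x y
    map_add' := fun a b => by
      funext x
      simp only [Pi.add_apply]
      rw [← Finset.sum_add_distrib]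
      exact Finset.sum_congr rfl fun y _ => by ring
    map_smul' := fun r a => by
      funext x
      simp only [Pi.smul_apply, smul_eq_mul, RingHom.id_apply]
      rw [Finset.mul_sum]
      exact Finset.sum_congr rfl fun y _ => by ring }
  let f : (Ω → ℝ) →ₗ[ℝ] ℝ :=
  { toFun := fun g => ∑ x, g x
    map_add' := fun a b => by simp [Finset.sum_add_distrib]
    map_smul' := fun r a => by simp [Finset.mul_sum] }
  have hLf : LinearMap.range L ≤ LinearMap.ker f := by
    rintro _ ⟨ψ, rfl⟩
    simp only [LinearMap.mem_ker]
    show ∑ x, ∑ y, (ψ x - ψ y) * c x y = 0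
    have h1 : ∑ x, ∑ y, (ψ x - ψ y) * c x y = ∑ y, ∑ x, (ψ x - ψ y) * c x y :=
      Finset.sum_comm
    have h2 : ∑ y, ∑ x, (ψ x - ψ y) * c x y = - ∑ x, ∑ y, (ψ x - ψ y) * c x y := by
      rw [← Finset.sum_neg_distrib]
      refine Finset.sum_congr rfl fun u _ => ?_
      rw [← Finset.sum_neg_distrib]
      refine Finset.sum_congr rfl fun v _ => ?_
      rw [hsymm v u]
      ring
    linarith [h1, h2]
  -- kernel of L is contained in the span of the constant function 1
  have hkerL : LinearMap.ker L ≤ Submodule.span ℝ {(fun _ => (1:ℝ) : Ω → ℝ)} := by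
    intro ψ hψ
    have hx : ∀ x, ∑ y, (ψ x - ψ y) * c x y = 0 := fun x => congrFun hψ x
    have hE : ∑ x, ∑ y, (ψ x - ψ y) * (ψ x - ψ y) * c x y = 0 := by
      rw [lemA c hsymm ψ ψ]
      have : ∀ x ∈ Finset.univ, ψ x * ∑ y, (ψ x - ψ y) * c x y = 0 := by
        intro x _; rw [hx x, mul_zero]
      rw [Finset.sum_eq_zero this, mul_zero]
    have hnn : ∀ x ∈ Finset.univ, (0:ℝ) ≤ ∑ y, (ψ x - ψ y) * (ψ x - ψ y) * c x y := by
      intro x _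
      refine Finset.sum_nonneg fun y _ => ?_
      have := mul_self_nonneg (ψ x - ψ y)
      exact mul_nonneg this (hnonneg x y)
    have hterm : ∀ x y, (ψ x - ψ y) * (ψ x - ψ y) * c x y = 0 := by
      intro x y
      have h1 := (Finset.sum_eq_zero_iff_of_nonneg hnn).mp hE x (Finset.mem_univ x)
      have hnn2 : ∀ y ∈ Finset.univ, (0:ℝ) ≤ (ψ x - ψ y) * (ψ x - ψ y) * c x y := by
        intro y _
        exact mul_nonneg (mul_self_nonneg _) (hnonneg x y)
      exact (Finset.sum_eq_zero_iff_of_nonneg hnn2).mp h1 y (Finset.mem_univ y)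
    have hadj : ∀ a b, (posGraph c).Adj a b → ψ a = ψ b := by
      intro a b hab
      have hc := hab.2.1
      have ht := hterm a b
      have h2 : (ψ a - ψ b) * (ψ a - ψ b) = 0 := by
        rcases mul_eq_zero.mp ht with h' | h'
        · exact h'
        · exact absurd h' (ne_of_gt hc)
      have h3 := mul_self_eq_zero.mp h2
      linarith
    have hreach : ∀ z w : Ω, (posGraph c).Reachable z w → ψ z = ψ w := by
      intro z w h
      obtain ⟨p⟩ := h
      induction p with
      | nil => rfl
      | cons h p ih => exact (hadj _ _ h).trans ih
    refine Submodule.mem_span_singleton.mpr ⟨ψ x0, ?_⟩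
    funext z
    have hz := hreach z x0 (hconn z x0)
    simp [hz]
  -- dimension counting
  have hcard : 0 < Fintype.card Ω := Fintype.card_pos_iff.mpr ⟨x0⟩
  have hfsurj : Function.Surjective f := by
    intro r
    refine ⟨fun _ => r / (Fintype.card Ω : ℝ), ?_⟩
    show ∑ _x : Ω, r / (Fintype.card Ω : ℝ) = r
    rw [Finset.sum_const, Finset.card_univ, nsmul_eq_mul]
    field_simp
  have hrangef : LinearMap.range f = ⊤ := LinearMap.range_eq_top.mpr hfsurj
  have hdim_pi : Module.finrank ℝ (Ω → ℝ) = Fintype.card Ω :=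
    Module.finrank_fintype_fun_eq_card ℝ
  have hkerf_dim : Module.finrank ℝ (LinearMap.ker f) = Fintype.card Ω - 1 := by
    have := LinearMap.finrank_range_add_finrank_ker f
    rw [hrangef, finrank_top, hdim_pi] at this
    have h1 : Module.finrank ℝ ℝ = 1 := Module.finrank_self ℝ
    omega
  have hkerL_dim : Module.finrank ℝ (LinearMap.ker L) ≤ 1 := by
    have hone : (fun _ => (1:ℝ) : Ω → ℝ) ≠ 0 := by
      intro h
      have := congrFun h x0
      simp at this
    calc Module.finrank ℝ (LinearMap.ker L)
        ≤ Module.finrank ℝ (Submodule.span ℝ {(fun _ => (1:ℝ) : Ω → ℝ)}) :=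
          Submodule.finrank_mono hkerL
      _ = 1 := finrank_span_singleton hone
  have hrangeL_dim : Module.finrank ℝ (LinearMap.ker f) ≤ Module.finrank ℝ (LinearMap.range L) := by
    have := LinearMap.finrank_range_add_finrank_ker L
    rw [hdim_pi] at this
    omega
  have heq : LinearMap.range L = LinearMap.ker f := Submodule.eq_of_le_of_finrank_le hLf hrangeL_dim
  have hDmem : D ∈ LinearMap.ker f := by
    simp only [LinearMap.mem_ker]
    exact hD
  rw [← heq] at hDmem
  obtain ⟨ψ, hψ⟩ := hDmem
  exact ⟨ψ, fun x => (congrFun hψ x).symm⟩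

/-- Potential formulation equals dual flux formulation of the discrete kinetic energy,
with both minima attained. -/
theorem potential_flux_duality {Ω : Type*} [Fintype Ω] (c : Ω → Ω → ℝ)
    (hsymm : ∀ x y, c x y = c y x)
    (hnonneg : ∀ x y, 0 ≤ c x y)
    (hdiag : ∀ x, c x x = 0)
    (hconn : (posGraph c).Connected)
    (D : Ω → ℝ) (hD : ∑ x, D x = 0) :
    ∃ m : ℝ,
      IsLeast {v : ℝ | ∃ ψ : Ω → ℝ,
        (∀ x, D x + ∑ y, (ψ y - ψ x) * c x y = 0) ∧
        v = (1 / 2) * ∑ x, ∑ y, (ψ x - ψ y) ^ 2 * c x y} m ∧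
      IsLeast {v : ℝ | ∃ J : Ω → Ω → ℝ,
        (∀ x y, J x y = - J y x) ∧
        (∀ x y, c x y = 0 → J x y = 0) ∧
        (∀ x, D x + ∑ y, J x y = 0) ∧
        v = (1 / 2) * ∑ x, ∑ y, if 0 < c x y then J x y ^ 2 / c x y else 0} m := by
  classical
  obtain ⟨ψ, hψ⟩ := exists_potential c hsymm hnonneg hconn D hD
  -- admissibility of ψ in the stated form
  have hadm : ∀ x, D x + ∑ y, (ψ y - ψ x) * c x y = 0 := by
    intro x
    have h1 : ∑ y, (ψ y - ψ x) * c x y = - ∑ y, (ψ x - ψ y) * c x y := by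
      rw [← Finset.sum_neg_distrib]
      exact Finset.sum_congr rfl fun y _ => by ring
    rw [h1, ← hψ x]; ring
  set m : ℝ := ∑ x, ψ x * D x with hm
  -- energy of ψ equals m
  have hE2 : ∑ x, ∑ y, (ψ x - ψ y) ^ 2 * c x y = 2 * m := by
    have h1 : ∑ x, ∑ y, (ψ x - ψ y) ^ 2 * c x y
        = ∑ x, ∑ y, (ψ x - ψ y) * (ψ x - ψ y) * c x y := by
      refine Finset.sum_congr rfl fun x _ => Finset.sum_congr rfl fun y _ => by ring
    rw [h1, lemA c hsymm ψ ψ]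
    have h2 : ∑ x, ψ x * ∑ y, (ψ x - ψ y) * c x y = ∑ x, ψ x * D x :=
      Finset.sum_congr rfl fun x _ => by rw [← hψ x]
    rw [h2, hm]
  have hE : (1 / 2 : ℝ) * ∑ x, ∑ y, (ψ x - ψ y) ^ 2 * c x y = m := by
    rw [hE2]; ring
  refine ⟨m, ⟨⟨ψ, hadm, hE.symm⟩, ?_⟩, ⟨?_, ?_⟩⟩
  · -- lower bound on the potential side
    rintro v ⟨ψ', hadm', hv⟩
    set h : Ω → ℝ := fun x => ψ' x - ψ x with hh
    have hψ' : ∀ x, ∑ y, (ψ' x - ψ' y) * c x y = D x := by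
      intro x
      have h1 : ∑ y, (ψ' y - ψ' x) * c x y = - ∑ y, (ψ' x - ψ' y) * c x y := by
        rw [← Finset.sum_neg_distrib]
        exact Finset.sum_congr rfl fun y _ => by ring
      have := hadm' x
      rw [h1] at this
      linarith
    have hzero : ∀ x, ∑ y, (h x - h y) * c x y = 0 := by
      intro x
      have : ∑ y, (h x - h y) * c x y
          = ∑ y, ((ψ' x - ψ' y) * c x y - (ψ x - ψ y) * c x y) := by
        refine Finset.sum_congr rfl fun y _ => ?_
        simp only [hh]; ring
      rw [this, Finset.sum_sub_distrib, hψ' x, ← hψ x, sub_self]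
    have hsplit : ∑ x, ∑ y, (ψ' x - ψ' y) ^ 2 * c x y
        = (∑ x, ∑ y, (ψ x - ψ y) ^ 2 * c x y)
          + (∑ x, ∑ y, (h x - h y) * (ψ x - ψ y) * c x y) * 2
          + ∑ x, ∑ y, (h x - h y) ^ 2 * c x y := by
      have hterm : ∀ x : Ω, ∑ y, (ψ' x - ψ' y) ^ 2 * c x y
          = ∑ y, ((ψ x - ψ y) ^ 2 * c x y
              + ((h x - h y) * (ψ x - ψ y) * c x y) * 2
              + (h x - h y) ^ 2 * c x y) :=
        fun x => Finset.sum_congr rfl fun y _ => by simp only [hh]; ring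
      simp only [hterm, Finset.sum_add_distrib, ← Finset.sum_mul]
    have hmid : ∑ x, ∑ y, (h x - h y) * (ψ x - ψ y) * c x y = 0 := by
      rw [lemA c hsymm h ψ]
      have : ∀ x ∈ Finset.univ, ψ x * ∑ y, (h x - h y) * c x y = 0 := by
        intro x _; rw [hzero x, mul_zero]
      rw [Finset.sum_eq_zero this, mul_zero]
    have hnn : 0 ≤ ∑ x, ∑ y, (h x - h y) ^ 2 * c x y :=
      Finset.sum_nonneg fun x _ => Finset.sum_nonneg fun y _ =>
        mul_nonneg (sq_nonneg _) (hnonneg x y)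
    rw [hv, hsplit, hmid, hE2]
    linarith
  · -- flux membership: J₀ x y = (ψ y - ψ x) * c x y
    refine ⟨fun x y => (ψ y - ψ x) * c x y, ?_, ?_, ?_, ?_⟩
    · intro x y
      show (ψ y - ψ x) * c x y = -((ψ x - ψ y) * c y x)
      rw [hsymm x y]; ring
    · intro x y hc
      show (ψ y - ψ x) * c x y = 0
      rw [hc, mul_zero]
    · exact hadm
    · have hterm : ∀ x y : Ω,
          (if 0 < c x y then ((ψ y - ψ x) * c x y) ^ 2 / c x y else 0)
            = (ψ x - ψ y) ^ 2 * c x y := by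
        intro x y
        by_cases hc : 0 < c x y
        · rw [if_pos hc]
          field_simp
          ring
        · rw [if_neg hc]
          have : c x y = 0 := le_antisymm (not_lt.mp hc) (hnonneg x y)
          rw [this, mul_zero]
      calc m = (1 / 2) * ∑ x, ∑ y, (ψ x - ψ y) ^ 2 * c x y := hE.symm
        _ = (1 / 2) * ∑ x, ∑ y, if 0 < c x y then ((ψ y - ψ x) * c x y) ^ 2 / c x y else 0 := by
            congr 1
            exact Finset.sum_congr rfl fun x _ => Finset.sum_congr rfl fun y _ => (hterm x y).symm
        _ = (1 / 2) * ∑ x, ∑ y, if 0 < c x y then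
              ((fun x y => (ψ y - ψ x) * c x y) x y) ^ 2 / c x y else 0 := rfl
  · -- lower bound on the flux side
    rintro v ⟨J, hanti, hJ0, hdiv, hv⟩
    have hterm : ∀ x y : Ω,
        2 * (J x y * (ψ y - ψ x)) - (ψ x - ψ y) ^ 2 * c x y
          ≤ (if 0 < c x y then J x y ^ 2 / c x y else 0) := by
      intro x y
      by_cases hc : 0 < c x y
      · rw [if_pos hc]
        have key : J x y ^ 2 / c x y - 2 * (J x y * (ψ y - ψ x)) + (ψ x - ψ y) ^ 2 * c x y
            = (J x y - (ψ y - ψ x) * c x y) ^ 2 / c x y := by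
          field_simp
          ring
        have hpos : 0 ≤ (J x y - (ψ y - ψ x) * c x y) ^ 2 / c x y :=
          div_nonneg (sq_nonneg _) hc.le
        linarith [key ▸ hpos]
      · rw [if_neg hc]
        have hc0 : c x y = 0 := le_antisymm (not_lt.mp hc) (hnonneg x y)
        rw [hJ0 x y hc0, hc0]
        simp
    have hsum : ∑ x, ∑ y, (2 * (J x y * (ψ y - ψ x)) - (ψ x - ψ y) ^ 2 * c x y)
        ≤ ∑ x, ∑ y, if 0 < c x y then J x y ^ 2 / c x y else 0 :=
      Finset.sum_le_sum fun x _ => Finset.sum_le_sum fun y _ => hterm x y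
    have hpair : ∑ x, ∑ y, J x y * (ψ y - ψ x) = 2 * m := by
      rw [lemB J hanti ψ]
      have : ∀ x ∈ Finset.univ, ψ x * ∑ y, J x y = ψ x * (- D x) := by
        intro x _
        congr 1
        have := hdiv x
        linarith
      rw [Finset.sum_congr rfl this, hm]
      simp only [mul_neg, Finset.sum_neg_distrib]
      ring
    have hlhs : ∑ x, ∑ y, (2 * (J x y * (ψ y - ψ x)) - (ψ x - ψ y) ^ 2 * c x y) = 2 * m := by
      have : ∀ x : Ω, ∑ y, (2 * (J x y * (ψ y - ψ x)) - (ψ x - ψ y) ^ 2 * c x y)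
          = 2 * (∑ y, J x y * (ψ y - ψ x)) - ∑ y, (ψ x - ψ y) ^ 2 * c x y := by
        intro x
        rw [Finset.sum_sub_distrib, Finset.mul_sum]
      simp only [this, Finset.sum_sub_distrib, ← Finset.mul_sum]
      rw [hpair, hE2]
      ring
    rw [hv]
    rw [hlhs] at hsum
    linarith
end

section
/- Let Ω be a finite set and let c : Ω × Ω → ℝ be symmetric, nonnegative, vanish on the diagonal, and have connected positivity graph E = {{x,y} : c(x,y) > 0}. For probability vectors μ, ν on Ω define W_{c,2}(μ, ν) as the square root of the minimum of (1/2)·Σ_{x,y : c(x,y)>0} J(x,y)²/c(x,y) over all antisymmetric J : Ω × Ω → ℝ vanishing wherever c(x,y) = 0 and satisfying (ν(x) − μ(x)) + Σ_{y∈Ω} J(x,y) = 0 for all x ∈ Ω. Then W_{c,2} is a metric on the set of probability vectors on Ω: W_{c,2}(μ,ν) ≥ 0 with equality if and only if μ = ν; W_{c,2}(μ,ν) = W_{c,2}(ν,μ); and W_{c,2}(μ,σ) ≤ W_{c,2}(μ,ν) + W_{c,2}(ν,σ) for all probability vectors μ, ν, σ on Ω. -/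
/-!
Rescaling a flux by `1 / √(2 c)` turns its energy into a squared Euclidean norm, so `W_{c,2}`
is the infimum of a norm over the fluxes transporting `μ` to `ν`. Adding fluxes composes
transports, which gives the triangle inequality; negating a flux reverses it, which gives
symmetry. Connectivity of the positivity graph makes every such family nonempty, by superposing
unit fluxes along walks to a fixed root. Finally, Cauchy–Schwarz at a vertex `x` bounds
`(ν x - μ x)²` by `2 (∑ y, c x y) W_{c,2}(μ, ν)²`, so `W_{c,2}(μ, ν) = 0` forces `μ = ν`.
-/

open Finset

/-- The discrete Wasserstein-2 distance associated with a fixed capacity `c`,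
in the dual flux formulation. -/
noncomputable def Wc2 {Ω : Type*} [Fintype Ω] (c : Ω → Ω → ℝ) (μ ν : Ω → ℝ) : ℝ :=
  Real.sqrt (sInf {v : ℝ | ∃ J : Ω → Ω → ℝ,
    (∀ x y, J x y = - J y x) ∧
    (∀ x y, c x y = 0 → J x y = 0) ∧
    (∀ x, (ν x - μ x) + ∑ y, J x y = 0) ∧
    v = (1 / 2) * ∑ x, ∑ y, if 0 < c x y then J x y ^ 2 / c x y else 0})

section

open scoped Pointwise

variable {Ω : Type*} {c : Ω → Ω → ℝ} {μ ν σ : Ω → ℝ} {J J₁ J₂ : Ω → Ω → ℝ}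

-- `√` and `/` send a nonpositive capacity to `0`, matching the `if` in `fluxEnergy`.
noncomputable def weightedFlux (c J : Ω → Ω → ℝ) : EuclideanSpace ℝ (Ω × Ω) :=
  WithLp.toLp 2 fun p => J p.1 p.2 / √(2 * c p.1 p.2)

theorem weightedFlux_add (c J₁ J₂ : Ω → Ω → ℝ) :
    weightedFlux c (J₁ + J₂) = weightedFlux c J₁ + weightedFlux c J₂ := by
  ext p
  simp [weightedFlux, add_div]

theorem weightedFlux_neg (c J : Ω → Ω → ℝ) : weightedFlux c (-J) = -weightedFlux c J := by
  ext p
  simp [weightedFlux, neg_div]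

variable [Fintype Ω]

noncomputable def fluxEnergy (c J : Ω → Ω → ℝ) : ℝ :=
  (1 / 2) * ∑ x, ∑ y, if 0 < c x y then J x y ^ 2 / c x y else 0

theorem fluxEnergy_eq_norm_sq (c J : Ω → Ω → ℝ) :
    fluxEnergy c J = ‖weightedFlux c J‖ ^ 2 := by
  rw [EuclideanSpace.real_norm_sq_eq, Fintype.sum_prod_type, fluxEnergy, mul_sum]
  refine sum_congr rfl fun x _ => ?_
  rw [mul_sum]
  refine sum_congr rfl fun y _ => ?_
  simp only [weightedFlux, div_pow]
  split_ifs with h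
  · rw [Real.sq_sqrt (by positivity)]
    field_simp
  · rw [Real.sqrt_eq_zero'.2 (by linarith [not_lt.1 h])]
    simp

theorem fluxEnergy_nonneg (c J : Ω → Ω → ℝ) : 0 ≤ fluxEnergy c J := by
  rw [fluxEnergy_eq_norm_sq]
  positivity


structure IsAdmissibleFlux (c : Ω → Ω → ℝ) (μ ν : Ω → ℝ) (J : Ω → Ω → ℝ) : Prop where
  antisymm : ∀ x y, J x y = -J y x
  eq_zero_of_capacity_eq_zero : ∀ x y, c x y = 0 → J x y = 0
  balance : ∀ x, (ν x - μ x) + ∑ y, J x y = 0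

namespace IsAdmissibleFlux

theorem zero (μ : Ω → ℝ) : IsAdmissibleFlux c μ μ 0 :=
  ⟨by simp, by simp, by simp⟩

theorem neg (hJ : IsAdmissibleFlux c μ ν J) : IsAdmissibleFlux c ν μ (-J) where
  antisymm x y := by simp [hJ.antisymm x y]
  eq_zero_of_capacity_eq_zero x y h := by simp [hJ.eq_zero_of_capacity_eq_zero x y h]
  balance x := by simp only [Pi.neg_apply, sum_neg_distrib]; linarith [hJ.balance x]

theorem of_sub_eq {μ' ν' : Ω → ℝ} (hJ : IsAdmissibleFlux c μ ν J) (h : ν' - μ' = ν - μ) :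
    IsAdmissibleFlux c μ' ν' J :=
  ⟨hJ.antisymm, hJ.eq_zero_of_capacity_eq_zero, fun x => by
    simpa only [← Pi.sub_apply, h] using hJ.balance x⟩

theorem sum {ι : Type*} {s : Finset ι} {μ ν : ι → Ω → ℝ} {J : ι → Ω → Ω → ℝ}
    (hJ : ∀ i ∈ s, IsAdmissibleFlux c (μ i) (ν i) (J i)) :
    IsAdmissibleFlux c (∑ i ∈ s, μ i) (∑ i ∈ s, ν i) (∑ i ∈ s, J i) where
  antisymm x y := by
    simp only [Finset.sum_apply, ← sum_neg_distrib]
    exact sum_congr rfl fun i hi => (hJ i hi).antisymm x y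
  eq_zero_of_capacity_eq_zero x y h := by
    simp only [Finset.sum_apply]
    exact sum_eq_zero fun i hi => (hJ i hi).eq_zero_of_capacity_eq_zero x y h
  balance x := by
    simp only [Finset.sum_apply]
    rw [sum_comm, ← sum_sub_distrib, ← sum_add_distrib]
    exact sum_eq_zero fun i hi => (hJ i hi).balance x

theorem add (h₁ : IsAdmissibleFlux c μ ν J₁) (h₂ : IsAdmissibleFlux c ν σ J₂) :
    IsAdmissibleFlux c μ σ (J₁ + J₂) where
  antisymm x y := by simp only [Pi.add_apply, h₁.antisymm x y, h₂.antisymm x y]; ring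
  eq_zero_of_capacity_eq_zero x y h := by
    simp [h₁.eq_zero_of_capacity_eq_zero x y h, h₂.eq_zero_of_capacity_eq_zero x y h]
  balance x := by
    simp only [Pi.add_apply, sum_add_distrib]; linarith [h₁.balance x, h₂.balance x]

variable [DecidableEq Ω]

theorem single_of_adj {u v : Ω} (huv : (posGraph c).Adj u v) (m : ℝ) :
    IsAdmissibleFlux c (Pi.single u m) (Pi.single v m)
      (Pi.single u (Pi.single v m) - Pi.single v (Pi.single u m)) where
  antisymm x y := by
    simp only [Pi.sub_apply, Pi.single_apply, ite_apply, Pi.zero_apply]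
    split_ifs <;> simp_all
  eq_zero_of_capacity_eq_zero x y h := by
    simp only [Pi.sub_apply, Pi.single_apply, ite_apply, Pi.zero_apply]
    split_ifs <;> simp_all [huv.2.1.ne', huv.2.2.ne']
  balance x := by
    simp only [Pi.sub_apply, sum_sub_distrib, Pi.single_apply, ite_apply, Pi.zero_apply]
    split_ifs <;> simp_all

theorem exists_single_of_reachable {a b : Ω} (h : (posGraph c).Reachable a b) (m : ℝ) :
    ∃ J, IsAdmissibleFlux c (Pi.single a m) (Pi.single b m) J := by
  obtain ⟨w⟩ := h
  induction w with
  | nil => exact ⟨0, .zero _⟩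
  | cons huv _ ih =>
    obtain ⟨J, hJ⟩ := ih
    exact ⟨_, (single_of_adj huv m).add hJ⟩

end IsAdmissibleFlux

theorem exists_isAdmissibleFlux (hconn : (posGraph c).Connected)
    (hmass : ∑ x, μ x = ∑ x, ν x) : ∃ J, IsAdmissibleFlux c μ ν J := by
  classical
  obtain ⟨o⟩ := hconn.nonempty
  choose J hJ using fun a =>
    IsAdmissibleFlux.exists_single_of_reachable (hconn.preconnected a o) (μ a - ν a)
  refine ⟨∑ a, J a, (IsAdmissibleFlux.sum fun a _ => hJ a).of_sub_eq ?_⟩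
  ext x
  simp [Finset.sum_apply, Pi.single_apply, sum_sub_distrib, hmass]

theorem IsAdmissibleFlux.sq_sub_le (hc : ∀ x y, 0 ≤ c x y) (hJ : IsAdmissibleFlux c μ ν J)
    (x : Ω) : (ν x - μ x) ^ 2 ≤ 2 * (∑ y, c x y) * fluxEnergy c J := by
  have hterm : ∀ z y, 0 ≤ if 0 < c z y then J z y ^ 2 / c z y else 0 := fun z y => by
    split_ifs <;> positivity
  have hsq_le : ∀ y, J x y ^ 2 ≤ c x y * if 0 < c x y then J x y ^ 2 / c x y else 0 := fun y => by
    split_ifs with h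
    · rw [mul_div_cancel₀ _ h.ne']
    · simp [hJ.eq_zero_of_capacity_eq_zero x y (le_antisymm (not_lt.1 h) (hc x y))]
  calc (ν x - μ x) ^ 2 = (∑ y, J x y) ^ 2 := by
        rw [eq_neg_of_add_eq_zero_left (hJ.balance x), neg_sq]
    _ ≤ (∑ y, c x y) * ∑ y, if 0 < c x y then J x y ^ 2 / c x y else 0 :=
      sum_sq_le_sum_mul_sum_of_sq_le_mul _ (fun y _ => hc x y) (fun y _ => hterm x y)
        fun y _ => hsq_le y
    _ ≤ (∑ y, c x y) * ∑ z, ∑ y, if 0 < c z y then J z y ^ 2 / c z y else 0 := by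
      refine mul_le_mul_of_nonneg_left ?_ (sum_nonneg fun y _ => hc x y)
      exact single_le_sum (fun z _ => sum_nonneg fun y _ => hterm z y) (mem_univ x)
    _ = 2 * (∑ y, c x y) * fluxEnergy c J := by rw [fluxEnergy]; ring

theorem Wc2_eq_sqrt_sInf_fluxEnergy (c : Ω → Ω → ℝ) (μ ν : Ω → ℝ) :
    Wc2 c μ ν = √(sInf (fluxEnergy c '' {J | IsAdmissibleFlux c μ ν J})) := by
  unfold Wc2
  congr 2
  ext v
  constructor
  · rintro ⟨J, h₁, h₂, h₃, rfl⟩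
    exact ⟨J, ⟨h₁, h₂, h₃⟩, rfl⟩
  · rintro ⟨J, ⟨h₁, h₂, h₃⟩, rfl⟩
    exact ⟨J, h₁, h₂, h₃, rfl⟩

theorem Wc2_eq_sInf_norm (c : Ω → Ω → ℝ) (μ ν : Ω → ℝ) :
    Wc2 c μ ν = sInf ((‖weightedFlux c ·‖) '' {J | IsAdmissibleFlux c μ ν J}) := by
  rw [Wc2_eq_sqrt_sInf_fluxEnergy]
  rcases {J | IsAdmissibleFlux c μ ν J}.eq_empty_or_nonempty with h | h
  · simp [h] -- both sides are the junk value `sInf ∅ = 0`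
  · rw [Real.sqrt_monotone.map_csInf_of_continuousAt Real.continuous_sqrt.continuousAt
      (h.image _) ⟨0, Set.forall_mem_image.2 fun J _ => fluxEnergy_nonneg c J⟩,
      Set.image_image]
    simp_rw [fluxEnergy_eq_norm_sq, Real.sqrt_sq (norm_nonneg _)]

theorem Wc2_self (c : Ω → Ω → ℝ) (μ : Ω → ℝ) : Wc2 c μ μ = 0 := by
  rw [Wc2_eq_sInf_norm]
  have hnonneg : ∀ r ∈ (‖weightedFlux c ·‖) '' {J | IsAdmissibleFlux c μ μ J}, 0 ≤ r :=
    Set.forall_mem_image.2 fun _ _ => norm_nonneg _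
  refine le_antisymm (csInf_le ⟨0, hnonneg⟩ ⟨0, .zero μ, ?_⟩) (Real.sInf_nonneg hnonneg)
  simp [weightedFlux, Pi.zero_def]

theorem Wc2_comm (c : Ω → Ω → ℝ) (μ ν : Ω → ℝ) : Wc2 c μ ν = Wc2 c ν μ := by
  have hswap : ∀ μ ν : Ω → ℝ, (‖weightedFlux c ·‖) '' {J | IsAdmissibleFlux c μ ν J} ⊆
      (‖weightedFlux c ·‖) '' {J | IsAdmissibleFlux c ν μ J} := by
    rintro μ ν _ ⟨J, hJ, rfl⟩
    exact ⟨-J, hJ.neg, by simp only [weightedFlux_neg, norm_neg]⟩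
  rw [Wc2_eq_sInf_norm, Wc2_eq_sInf_norm, (hswap μ ν).antisymm (hswap ν μ)]

theorem Wc2_le_add (hμν : {J | IsAdmissibleFlux c μ ν J}.Nonempty)
    (hνσ : {J | IsAdmissibleFlux c ν σ J}.Nonempty) :
    Wc2 c μ σ ≤ Wc2 c μ ν + Wc2 c ν σ := by
  have hbdd : ∀ μ ν : Ω → ℝ, BddBelow ((‖weightedFlux c ·‖) '' {J | IsAdmissibleFlux c μ ν J}) :=
    fun _ _ => ⟨0, Set.forall_mem_image.2 fun _ _ => norm_nonneg _⟩
  simp only [Wc2_eq_sInf_norm]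
  rw [← csInf_add (hμν.image _) (hbdd μ ν) (hνσ.image _) (hbdd ν σ)]
  refine le_csInf ((hμν.image _).add (hνσ.image _)) ?_
  rintro _ ⟨_, ⟨J₁, h₁, rfl⟩, _, ⟨J₂, h₂, rfl⟩, rfl⟩
  refine (csInf_le (hbdd μ σ) ⟨J₁ + J₂, h₁.add h₂, rfl⟩).trans ?_
  simp only [weightedFlux_add]
  exact norm_add_le _ _

theorem sq_sub_le_mul_Wc2_sq (hc : ∀ x y, 0 ≤ c x y)
    (hμν : {J | IsAdmissibleFlux c μ ν J}.Nonempty) (x : Ω) :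
    (ν x - μ x) ^ 2 ≤ 2 * (∑ y, c x y) * Wc2 c μ ν ^ 2 := by
  have hk : 0 ≤ 2 * ∑ y, c x y := mul_nonneg zero_le_two (sum_nonneg fun y _ => hc x y)
  have hne : (fluxEnergy c '' {J | IsAdmissibleFlux c μ ν J}).Nonempty := hμν.image _
  have hnonneg : ∀ e ∈ fluxEnergy c '' {J | IsAdmissibleFlux c μ ν J}, 0 ≤ e :=
    Set.forall_mem_image.2 fun J _ => fluxEnergy_nonneg c J
  rw [Wc2_eq_sqrt_sInf_fluxEnergy, Real.sq_sqrt (Real.sInf_nonneg hnonneg),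
    (monotone_mul_left_of_nonneg hk).map_csInf_of_continuousAt
      (continuous_const_mul _).continuousAt hne ⟨0, hnonneg⟩]
  exact le_csInf (hne.image _)
    (Set.forall_mem_image.2 <| Set.forall_mem_image.2 fun J hJ => hJ.sq_sub_le hc x)

theorem eq_of_Wc2_eq_zero (hc : ∀ x y, 0 ≤ c x y)
    (hμν : {J | IsAdmissibleFlux c μ ν J}.Nonempty) (h : Wc2 c μ ν = 0) : μ = ν := by
  funext x
  have hsq : (ν x - μ x) ^ 2 ≤ 0 := by simpa [h] using sq_sub_le_mul_Wc2_sq hc hμν x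
  nlinarith [sq_nonneg (ν x - μ x)]

end

theorem Wc2_is_metric_general {Ω : Type*} [Fintype Ω] (c : Ω → Ω → ℝ)
    (hnonneg : ∀ x y, 0 ≤ c x y)
    (hconn : (posGraph c).Connected) :
    (∀ μ ν : Ω → ℝ, (∀ x, 0 ≤ μ x) → (∑ x, μ x = 1) → (∀ x, 0 ≤ ν x) → (∑ x, ν x = 1) →
      0 ≤ Wc2 c μ ν ∧ (Wc2 c μ ν = 0 ↔ μ = ν)) ∧
    (∀ μ ν : Ω → ℝ, (∀ x, 0 ≤ μ x) → (∑ x, μ x = 1) → (∀ x, 0 ≤ ν x) → (∑ x, ν x = 1) →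
      Wc2 c μ ν = Wc2 c ν μ) ∧
    (∀ μ ν σ : Ω → ℝ, (∀ x, 0 ≤ μ x) → (∑ x, μ x = 1) → (∀ x, 0 ≤ ν x) → (∑ x, ν x = 1) →
      (∀ x, 0 ≤ σ x) → (∑ x, σ x = 1) →
      Wc2 c μ σ ≤ Wc2 c μ ν + Wc2 c ν σ) := by
  have hflux : ∀ μ ν : Ω → ℝ, ∑ x, μ x = 1 → ∑ x, ν x = 1 →
      {J | IsAdmissibleFlux c μ ν J}.Nonempty :=
    fun μ ν hμ hν => exists_isAdmissibleFlux hconn (hμ.trans hν.symm)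
  refine ⟨fun μ ν _ hμ _ hν => ⟨Real.sqrt_nonneg _, ?_⟩, fun μ ν _ _ _ _ => Wc2_comm c μ ν,
    fun μ ν σ _ hμ _ hν _ hσ => Wc2_le_add (hflux μ ν hμ hν) (hflux ν σ hν hσ)⟩
  exact ⟨eq_of_Wc2_eq_zero hnonneg (hflux μ ν hμ hν), fun h => h ▸ Wc2_self c μ⟩

/-- `W_{c,2}` is a metric on the set of probability vectors on `Ω`. -/
theorem Wc2_is_metric {Ω : Type*} [Fintype Ω] (c : Ω → Ω → ℝ)
    (hsymm : ∀ x y, c x y = c y x)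
    (hnonneg : ∀ x y, 0 ≤ c x y)
    (hdiag : ∀ x, c x x = 0)
    (hconn : (posGraph c).Connected) :
    (∀ μ ν : Ω → ℝ, (∀ x, 0 ≤ μ x) → (∑ x, μ x = 1) → (∀ x, 0 ≤ ν x) → (∑ x, ν x = 1) →
      0 ≤ Wc2 c μ ν ∧ (Wc2 c μ ν = 0 ↔ μ = ν)) ∧
    (∀ μ ν : Ω → ℝ, (∀ x, 0 ≤ μ x) → (∑ x, μ x = 1) → (∀ x, 0 ≤ ν x) → (∑ x, ν x = 1) →
      Wc2 c μ ν = Wc2 c ν μ) ∧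
    (∀ μ ν σ : Ω → ℝ, (∀ x, 0 ≤ μ x) → (∑ x, μ x = 1) → (∀ x, 0 ≤ ν x) → (∑ x, ν x = 1) →
      (∀ x, 0 ≤ σ x) → (∑ x, σ x = 1) →
      Wc2 c μ σ ≤ Wc2 c μ ν + Wc2 c ν σ) :=
  Wc2_is_metric_general c hnonneg hconn
end

section
/- Let Ω be a finite set, let π be a strictly positive probability vector on Ω, and let p be a transition rate kernel on Ω reversible with respect to π whose underlying graph is connected; let c(x,y) = π(x)·p(x,y) for x ≠ y and let E denote the associated Dirichlet form and W_{c,2} the associated flux-formulation Wasserstein distance. Suppose p satisfies the Poincaré inequality Var_π[f] ≤ C_PI · E(f, f) for all f : Ω → ℝ. Then for every probability vector μ on Ω, W_{c,2}(μ, π)² ≤ C_PI · χ²(μ ‖ π), where χ²(μ ‖ π) = Σ_{x∈Ω} (μ(x) − π(x))²/π(x). -/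
open Finset

/-- The underlying graph of a transition rate kernel `p`. -/
def kernelGraph {Ω : Type*} (p : Ω → Ω → ℝ) : SimpleGraph Ω where
  Adj x y := x ≠ y ∧ (0 < p x y ∨ 0 < p y x)
  symm := ⟨fun x y h => ⟨h.1.symm, h.2.symm⟩⟩
  loopless := ⟨fun x h => h.1 rfl⟩

lemma dirichlet_expand' {Ω : Type*} [Fintype Ω] (π : Ω → ℝ) (p : Ω → Ω → ℝ)
    (hrow : ∀ x, ∑ y, p x y = 0) (hrev : ∀ x y, π x * p x y = π y * p y x) (ψ : Ω → ℝ) :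
    ∑ x, ∑ y, (ψ y - ψ x) * (ψ y - ψ x) * (π x * p x y)
      = -2 * ∑ x, ψ x * ∑ y, π x * p x y * ψ y := by
  have hA : ∑ x, ∑ y, ψ y * ψ y * (π x * p x y) = 0 := by
    rw [Finset.sum_comm]
    refine Finset.sum_eq_zero fun y _ => ?_
    calc ∑ x, ψ y * ψ y * (π x * p x y) = ψ y * ψ y * π y * ∑ x, p y x := by
          rw [Finset.mul_sum]; exact Finset.sum_congr rfl fun x _ => by rw [hrev x y]; ring
      _ = 0 := by rw [hrow]; ring
  have hB : ∑ x, ∑ y, ψ x * ψ x * (π x * p x y) = 0 := by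
    refine Finset.sum_eq_zero fun x _ => ?_
    calc ∑ y, ψ x * ψ x * (π x * p x y) = ψ x * ψ x * π x * ∑ y, p x y := by
          rw [Finset.mul_sum]; exact Finset.sum_congr rfl fun y _ => by ring
      _ = 0 := by rw [hrow]; ring
  have expand : ∀ x : Ω, ∑ y, (ψ y - ψ x) * (ψ y - ψ x) * (π x * p x y)
      = (∑ y, ψ y * ψ y * (π x * p x y)) + (∑ y, ψ x * ψ x * (π x * p x y))
        - 2 * (ψ x * ∑ y, π x * p x y * ψ y) := by
    intro x
    rw [Finset.mul_sum, Finset.mul_sum, ← Finset.sum_add_distrib, ← Finset.sum_sub_distrib]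
    exact Finset.sum_congr rfl fun y _ => by ring
  calc ∑ x, ∑ y, (ψ y - ψ x) * (ψ y - ψ x) * (π x * p x y)
      = (∑ x, ∑ y, ψ y * ψ y * (π x * p x y)) + (∑ x, ∑ y, ψ x * ψ x * (π x * p x y))
          - ∑ x, 2 * (ψ x * ∑ y, π x * p x y * ψ y) := by
        rw [← Finset.sum_add_distrib, ← Finset.sum_sub_distrib]
        exact Finset.sum_congr rfl fun x _ => expand x
    _ = -2 * ∑ x, ψ x * ∑ y, π x * p x y * ψ y := by
        rw [hA, hB, ← Finset.mul_sum]; ring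

lemma poisson_solve' {Ω : Type*} [Fintype Ω] [DecidableEq Ω] (π : Ω → ℝ) (p : Ω → Ω → ℝ)
    (hπpos : ∀ x, 0 < π x)
    (hp : ∀ x y, x ≠ y → 0 ≤ p x y) (hrow : ∀ x, ∑ y, p x y = 0)
    (hrev : ∀ x y, π x * p x y = π y * p y x)
    (hconn : (kernelGraph p).Connected)
    (g : Ω → ℝ) (hg : ∑ x, g x = 0) :
    ∃ ψ : Ω → ℝ, ∀ x, ∑ y, π x * p x y * ψ y = g x := by
  classical
  haveI : Nonempty Ω := hconn.nonempty
  set M : Matrix Ω Ω ℝ := Matrix.of (fun x y => π x * p x y) with hM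
  set T := M.mulVecLin with hT
  have hTapp : ∀ ψ : Ω → ℝ, ∀ x, T ψ x = ∑ y, π x * p x y * ψ y := by
    intro ψ x
    simp [hT, hM, Matrix.mulVecLin_apply, Matrix.mulVec, dotProduct]
  let sumL : (Ω → ℝ) →ₗ[ℝ] ℝ :=
    { toFun := fun f => ∑ x, f x
      map_add' := fun f g => by simp [Finset.sum_add_distrib]
      map_smul' := fun r f => by simp [Finset.mul_sum] }
  have hsurj : Function.Surjective sumL := by
    intro r
    refine ⟨Pi.single (Classical.arbitrary Ω) r, ?_⟩
    simp [sumL, Pi.single_apply]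
  have hker_sum : Module.finrank ℝ (LinearMap.ker sumL) = Fintype.card Ω - 1 := by
    have h1 := LinearMap.finrank_range_add_finrank_ker sumL
    rw [LinearMap.range_eq_top.mpr hsurj] at h1
    simp [Module.finrank_pi] at h1
    omega
  have hkerT : LinearMap.ker T ≤ Submodule.span ℝ {(fun _ => (1:ℝ) : Ω → ℝ)} := by
    intro ψ hψ
    have hψ0 : ∀ x, ∑ y, π x * p x y * ψ y = 0 := by
      intro x
      have := congrFun (LinearMap.mem_ker.mp hψ) x
      rw [← hTapp ψ x]; exact this
    have hE0 : ∑ x, ∑ y, (ψ y - ψ x) * (ψ y - ψ x) * (π x * p x y) = 0 := by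
      rw [dirichlet_expand' π p hrow hrev ψ]
      have : ∑ x, ψ x * ∑ y, π x * p x y * ψ y = 0 :=
        Finset.sum_eq_zero fun x _ => by rw [hψ0 x, mul_zero]
      rw [this]; ring
    have hnn : ∀ x y : Ω, 0 ≤ (ψ y - ψ x) * (ψ y - ψ x) * (π x * p x y) := by
      intro x y
      rcases eq_or_ne x y with rfl | hxy
      · simp
      · exact mul_nonneg (mul_self_nonneg _) (mul_nonneg (hπpos x).le (hp x y hxy))
    have hterm : ∀ x y : Ω, (ψ y - ψ x) * (ψ y - ψ x) * (π x * p x y) = 0 := by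
      have h1 := (Finset.sum_eq_zero_iff_of_nonneg
        (fun x _ => Finset.sum_nonneg fun y _ => hnn x y)).mp hE0
      intro x y
      have h2 := (Finset.sum_eq_zero_iff_of_nonneg (fun y _ => hnn x y)).mp
        (h1 x (Finset.mem_univ x))
      exact h2 y (Finset.mem_univ y)
    have hadj : ∀ x y : Ω, (kernelGraph p).Adj x y → ψ x = ψ y := by
      intro x y hxy
      obtain ⟨hne, hpos⟩ : x ≠ y ∧ (0 < p x y ∨ 0 < p y x) := hxy
      have hpxy : 0 < p x y := by
        rcases hpos with h | h
        · exact h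
        · have h2 : 0 < π x * p x y := by rw [hrev x y]; exact mul_pos (hπpos y) h
          by_contra hle
          push_neg at hle
          nlinarith [hπpos x]
      have ht := hterm x y
      have hc : 0 < π x * p x y := mul_pos (hπpos x) hpxy
      rcases mul_eq_zero.mp ht with h' | h'
      · have := mul_self_eq_zero.mp h'
        linarith [sub_eq_zero.mp this]
      · exact absurd h' hc.ne'
    have hconst : ∀ x y : Ω, ψ x = ψ y := by
      intro x y
      obtain ⟨w⟩ := hconn x y
      induction w with
      | nil => rfl
      | cons h _ ih => exact (hadj _ _ h).trans ih
    have x₀ : Ω := Classical.arbitrary Ω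
    have : ψ = ψ x₀ • (fun _ => (1:ℝ)) := by
      funext z; simp [hconst z x₀]
    rw [this]
    exact Submodule.smul_mem _ _ (Submodule.mem_span_singleton_self _)
  have hrankkerT : Module.finrank ℝ (LinearMap.ker T) ≤ 1 := by
    have h1 : Module.finrank ℝ (Submodule.span ℝ {(fun _ => (1:ℝ) : Ω → ℝ)}) = 1 := by
      apply finrank_span_singleton
      intro h
      have := congrFun h (Classical.arbitrary Ω)
      simpa using this
    calc Module.finrank ℝ (LinearMap.ker T)
        ≤ Module.finrank ℝ (Submodule.span ℝ {(fun _ => (1:ℝ) : Ω → ℝ)}) :=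
          Submodule.finrank_mono hkerT
      _ = 1 := h1
  have hle : LinearMap.range T ≤ LinearMap.ker sumL := by
    rintro _ ⟨ψ, rfl⟩
    rw [LinearMap.mem_ker]
    show ∑ x, T ψ x = 0
    calc ∑ x, T ψ x = ∑ x, ∑ y, π x * p x y * ψ y :=
          Finset.sum_congr rfl fun x _ => hTapp ψ x
      _ = ∑ y, ∑ x, π y * p y x * ψ y := by
          rw [Finset.sum_comm]
          exact Finset.sum_congr rfl fun y _ => Finset.sum_congr rfl fun x _ => by
            rw [hrev x y]
      _ = 0 := Finset.sum_eq_zero fun y _ => by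
          rw [← Finset.sum_mul, ← Finset.mul_sum, hrow]; ring
  have hrange : LinearMap.range T = LinearMap.ker sumL := by
    apply Submodule.eq_of_le_of_finrank_le hle
    have h1 := LinearMap.finrank_range_add_finrank_ker T
    rw [Module.finrank_pi] at h1
    have hcard : 1 ≤ Fintype.card Ω := Fintype.card_pos
    omega
  have hgmem : g ∈ LinearMap.ker sumL := by
    rw [LinearMap.mem_ker]; exact hg
  rw [← hrange] at hgmem
  obtain ⟨ψ, hψ⟩ := hgmem
  exact ⟨ψ, fun x => by rw [← hTapp ψ x, hψ]⟩


/-- Transport–variance inequality: a Poincaré inequality for `p` implies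
`W_{c,2}(μ, π)² ≤ C_PI · χ²(μ ‖ π)`. -/
theorem transport_variance_inequality {Ω : Type*} [Fintype Ω] [DecidableEq Ω]
    (π : Ω → ℝ) (p : Ω → Ω → ℝ)
    (hπpos : ∀ x, 0 < π x) (hπsum : ∑ x, π x = 1)
    (hp : ∀ x y, x ≠ y → 0 ≤ p x y) (hrow : ∀ x, ∑ y, p x y = 0)
    (hrev : ∀ x y, π x * p x y = π y * p y x)
    (hconn : (kernelGraph p).Connected)
    (c : Ω → Ω → ℝ) (hc : ∀ x y, c x y = if x = y then 0 else π x * p x y)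
    (CPI : ℝ)
    (hPI : ∀ f : Ω → ℝ,
      (∑ x, π x * f x ^ 2) - (∑ x, π x * f x) ^ 2 ≤
        CPI * ((1 / 2) * ∑ x, ∑ y, (f y - f x) * (f y - f x) * (π x * p x y))) :
    ∀ μ : Ω → ℝ, (∀ x, 0 ≤ μ x) → (∑ x, μ x = 1) →
      Wc2 c μ π ^ 2 ≤ CPI * ∑ x, (μ x - π x) ^ 2 / π x := by
  classical
  intro μ hμ0 hμsum
  -- solve the Poisson equation
  obtain ⟨ψ, hψ⟩ := poisson_solve' π p hπpos hp hrow hrev hconn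
    (fun x => μ x - π x) (by rw [Finset.sum_sub_distrib, hμsum, hπsum]; ring)
  set χ : ℝ := ∑ x, (μ x - π x) ^ 2 / π x with hχ
  have hχnn : 0 ≤ χ := Finset.sum_nonneg fun x _ =>
    div_nonneg (sq_nonneg _) (hπpos x).le
  set E : ℝ := (1 / 2) * ∑ x, ∑ y, (ψ y - ψ x) * (ψ y - ψ x) * (π x * p x y) with hE
  have hnn : ∀ x y : Ω, 0 ≤ (ψ y - ψ x) * (ψ y - ψ x) * (π x * p x y) := by
    intro x y
    rcases eq_or_ne x y with rfl | hxy
    · simp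
    · exact mul_nonneg (mul_self_nonneg _) (mul_nonneg (hπpos x).le (hp x y hxy))
  have hEnn : 0 ≤ E := by
    rw [hE]
    have : (0:ℝ) ≤ ∑ x, ∑ y, (ψ y - ψ x) * (ψ y - ψ x) * (π x * p x y) :=
      Finset.sum_nonneg fun x _ => Finset.sum_nonneg fun y _ => hnn x y
    linarith
  -- E = ∑ ψ (π - μ)
  have hEval : E = ∑ x, ψ x * (π x - μ x) := by
    have h1 : ∑ x, ∑ y, (ψ y - ψ x) * (ψ y - ψ x) * (π x * p x y)
        = -2 * ∑ x, ψ x * (μ x - π x) := by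
      rw [dirichlet_expand' π p hrow hrev ψ]
      congr 1
      exact Finset.sum_congr rfl fun x _ => by rw [hψ x]
    have h2 : ∑ x, ψ x * (π x - μ x) = - ∑ x, ψ x * (μ x - π x) := by
      rw [← Finset.sum_neg_distrib]
      exact Finset.sum_congr rfl fun x _ => by ring
    rw [hE, h1, h2]; ring
  set m : ℝ := ∑ x, π x * ψ x with hm
  have hcent : ∑ x, (ψ x - m) * (π x - μ x) = E := by
    rw [hEval]
    have h4 : ∑ x, (π x - μ x) = 0 := by rw [Finset.sum_sub_distrib, hπsum, hμsum]; ring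
    calc ∑ x, (ψ x - m) * (π x - μ x)
        = (∑ x, ψ x * (π x - μ x)) - m * ∑ x, (π x - μ x) := by
          rw [Finset.mul_sum, ← Finset.sum_sub_distrib]
          exact Finset.sum_congr rfl fun x _ => by ring
      _ = ∑ x, ψ x * (π x - μ x) := by rw [h4]; ring
  have hCS : E ^ 2 ≤ (∑ x, π x * (ψ x - m) ^ 2) * χ := by
    have hcs := Finset.sum_mul_sq_le_sq_mul_sq Finset.univ
      (fun x => Real.sqrt (π x) * (ψ x - m))
      (fun x => (π x - μ x) / Real.sqrt (π x))
    have e1 : ∑ x, (Real.sqrt (π x) * (ψ x - m)) * ((π x - μ x) / Real.sqrt (π x))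
        = ∑ x, (ψ x - m) * (π x - μ x) := by
      refine Finset.sum_congr rfl fun x _ => ?_
      have hs : Real.sqrt (π x) ≠ 0 := (Real.sqrt_pos.mpr (hπpos x)).ne'
      field_simp
    have e2 : ∑ x, (Real.sqrt (π x) * (ψ x - m)) ^ 2 = ∑ x, π x * (ψ x - m) ^ 2 := by
      refine Finset.sum_congr rfl fun x _ => ?_
      rw [mul_pow, Real.sq_sqrt (hπpos x).le]
    have e3 : ∑ x, ((π x - μ x) / Real.sqrt (π x)) ^ 2 = χ := by
      rw [hχ]
      refine Finset.sum_congr rfl fun x _ => ?_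
      rw [div_pow, Real.sq_sqrt (hπpos x).le]
      congr 1
      ring
    rw [e1, e2, e3, hcent] at hcs
    exact hcs
  have hvar : ∑ x, π x * (ψ x - m) ^ 2 = (∑ x, π x * ψ x ^ 2) - (∑ x, π x * ψ x) ^ 2 := by
    calc ∑ x, π x * (ψ x - m) ^ 2
        = ∑ x, (π x * ψ x ^ 2 - 2 * m * (π x * ψ x) + m ^ 2 * π x) :=
          Finset.sum_congr rfl fun x _ => by ring
      _ = (∑ x, π x * ψ x ^ 2) - 2 * m * (∑ x, π x * ψ x) + m ^ 2 * (∑ x, π x) := by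
          rw [Finset.sum_add_distrib, Finset.sum_sub_distrib, ← Finset.mul_sum, ← Finset.mul_sum]
      _ = (∑ x, π x * ψ x ^ 2) - (∑ x, π x * ψ x) ^ 2 := by
          rw [hπsum, ← hm]; ring
  have hPoin : (∑ x, π x * ψ x ^ 2) - (∑ x, π x * ψ x) ^ 2 ≤ CPI * E := by
    rw [hE]; exact hPI ψ
  have hVle : ∑ x, π x * (ψ x - m) ^ 2 ≤ CPI * E := by rw [hvar]; exact hPoin
  have hdiv : ∀ x, ∑ y, π x * p x y * (ψ y - ψ x) = μ x - π x := by
    intro x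
    have h7 : ∑ y, π x * p x y * (ψ y - ψ x)
        = (∑ y, π x * p x y * ψ y) - ψ x * π x * (∑ y, p x y) := by
      rw [Finset.mul_sum, ← Finset.sum_sub_distrib]
      exact Finset.sum_congr rfl fun y _ => by ring
    rw [h7, hψ x, hrow x]; ring
  have hmain : E ≤ CPI * χ := by
    rcases lt_or_eq_of_le hEnn with hpos | heq
    · have h2 : E * E ≤ (CPI * χ) * E := by
        nlinarith [mul_le_mul_of_nonneg_right hVle hχnn, hCS]
      exact le_of_mul_le_mul_right h2 hpos
    · have hE0 : ∑ x, ∑ y, (ψ y - ψ x) * (ψ y - ψ x) * (π x * p x y) = 0 := by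
        have h8 : E = 0 := heq.symm
        rw [hE] at h8; linarith
      have hterm : ∀ x y : Ω, (ψ y - ψ x) * (ψ y - ψ x) * (π x * p x y) = 0 := by
        have h1 := (Finset.sum_eq_zero_iff_of_nonneg
          (fun x _ => Finset.sum_nonneg fun y _ => hnn x y)).mp hE0
        intro x y
        exact (Finset.sum_eq_zero_iff_of_nonneg (fun y _ => hnn x y)).mp
          (h1 x (Finset.mem_univ x)) y (Finset.mem_univ y)
      have hμπ : ∀ x, μ x = π x := by
        intro x
        have h6 : ∑ y, π x * p x y * (ψ y - ψ x) = 0 :=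
          Finset.sum_eq_zero fun y _ => by
            rcases eq_or_ne (ψ y - ψ x) 0 with h | h
            · rw [h, mul_zero]
            · rcases mul_eq_zero.mp (hterm x y) with h' | h'
              · exact absurd (mul_self_eq_zero.mp h') h
              · rw [h', zero_mul]
        have := (hdiv x).symm.trans h6
        linarith
      have hχ0 : χ = 0 := by
        rw [hχ]
        exact Finset.sum_eq_zero fun x _ => by rw [hμπ x]; simp
      rw [hχ0, ← heq]
      simp
  -- flux membership
  have hcsymm : ∀ x y, c x y = c y x := by
    intro x y
    rcases eq_or_ne x y with rfl | hxy
    · rfl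
    · rw [hc, hc, if_neg hxy, if_neg (Ne.symm hxy), hrev]
  have hcnn : ∀ x y, 0 ≤ c x y := by
    intro x y; rw [hc]
    rcases eq_or_ne x y with rfl | hxy
    · simp
    · rw [if_neg hxy]; exact mul_nonneg (hπpos x).le (hp x y hxy)
  have hcost : ∀ x y : Ω, (if 0 < c x y then (c x y * (ψ y - ψ x)) ^ 2 / c x y else 0)
      = (ψ y - ψ x) * (ψ y - ψ x) * (π x * p x y) := by
    intro x y
    rcases eq_or_ne x y with rfl | hxy
    · simp [hc]
    · have hcval : c x y = π x * p x y := by rw [hc, if_neg hxy]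
      rcases lt_or_eq_of_le (hcnn x y) with hpos | h0
      · rw [if_pos hpos, ← hcval]
        field_simp
      · rw [if_neg (by rw [← h0]; exact lt_irrefl 0), ← hcval, ← h0]
        ring
  have hmem : ∃ J : Ω → Ω → ℝ,
      (∀ x y, J x y = - J y x) ∧
      (∀ x y, c x y = 0 → J x y = 0) ∧
      (∀ x, (π x - μ x) + ∑ y, J x y = 0) ∧
      E = (1 / 2) * ∑ x, ∑ y, if 0 < c x y then J x y ^ 2 / c x y else 0 := by
    refine ⟨fun x y => c x y * (ψ y - ψ x), ?_, ?_, ?_, ?_⟩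
    · intro x y
      show c x y * (ψ y - ψ x) = -(c y x * (ψ x - ψ y))
      rw [hcsymm x y]; ring
    · intro x y h
      show c x y * (ψ y - ψ x) = 0
      rw [h, zero_mul]
    · intro x
      show (π x - μ x) + ∑ y, c x y * (ψ y - ψ x) = 0
      have h9 : ∑ y, c x y * (ψ y - ψ x) = ∑ y, π x * p x y * (ψ y - ψ x) := by
        refine Finset.sum_congr rfl fun y _ => ?_
        rcases eq_or_ne x y with rfl | hxy
        · simp [hc]
        · rw [hc, if_neg hxy]
      rw [h9, hdiv x]; ring
    · show E = (1 / 2) * ∑ x, ∑ y, if 0 < c x y then (c x y * (ψ y - ψ x)) ^ 2 / c x y else 0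
      rw [hE]
      congr 1
      exact Finset.sum_congr rfl fun x _ => Finset.sum_congr rfl fun y _ => (hcost x y).symm
  have hlb : ∀ v : ℝ, (∃ J : Ω → Ω → ℝ,
      (∀ x y, J x y = - J y x) ∧
      (∀ x y, c x y = 0 → J x y = 0) ∧
      (∀ x, (π x - μ x) + ∑ y, J x y = 0) ∧
      v = (1 / 2) * ∑ x, ∑ y, if 0 < c x y then J x y ^ 2 / c x y else 0) → 0 ≤ v := by
    rintro v ⟨J, -, -, -, rfl⟩
    have h10 : (0:ℝ) ≤ ∑ x, ∑ y, if 0 < c x y then J x y ^ 2 / c x y else 0 :=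
      Finset.sum_nonneg fun x _ => Finset.sum_nonneg fun y _ => by
        split
        · exact div_nonneg (sq_nonneg _) (le_of_lt (by assumption))
        · exact le_refl 0
    linarith
  show Real.sqrt (sInf _) ^ 2 ≤ CPI * χ
  have h0 : 0 ≤ sInf {v : ℝ | ∃ J : Ω → Ω → ℝ,
      (∀ x y, J x y = - J y x) ∧
      (∀ x y, c x y = 0 → J x y = 0) ∧
      (∀ x, (π x - μ x) + ∑ y, J x y = 0) ∧
      v = (1 / 2) * ∑ x, ∑ y, if 0 < c x y then J x y ^ 2 / c x y else 0} :=
    le_csInf ⟨E, hmem⟩ fun v hv => hlb v hv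
  rw [Real.sq_sqrt h0]
  exact le_trans (csInf_le ⟨0, fun v hv => hlb v hv⟩ hmem) hmain
end

section
/- Let Ω be a finite set, let π be a strictly positive probability vector on Ω, and let p be a transition rate kernel on Ω reversible with respect to π whose underlying graph is connected; let c(x,y) = π(x)·p(x,y) for x ≠ y and let E denote the associated Dirichlet form and W_{c,2} the associated flux-formulation Wasserstein distance. Suppose p satisfies the modified log-Sobolev inequality Ent_π[f] ≤ C_MLSI · E(log f, f) for all strictly positive f : Ω → ℝ. Then for every probability vector μ on Ω, W_{c,2}(μ, π)² ≤ 4·C_MLSI · (max_{x∈Ω} μ(x)/π(x)) · KL(μ ‖ π), where KL(μ ‖ π) = Σ_{x : μ(x)>0} μ(x)·log(μ(x)/π(x)). -/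
/-!
Linearising the modified log-Sobolev inequality at `f = 1 + ε h` and letting `ε → 0` gives the
Poincaré inequality `Var_π h ≤ 2 C_MLSI 𝓔(h, h)`. The weighted Laplacian `L` is symmetric and,
the graph being connected, its kernel consists of the constants, so `L g = μ - π` is solvable.
The gradient flux `c ∇g` is admissible, whence
`W² ≤ 𝓔(g, g) = ∑ (π - μ) g = ∑ π (1 - F) (g - E_π g)` with `F = μ / π`. Cauchy–Schwarz, the Poincaré inequality and the pointwise bound
`(t - 1)² ≤ 2 M klFun t` on `[0, M]`, `M = max F ≥ 1`, together with `∑ π klFun F = KL(μ ‖ π)`,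
give `𝓔(g, g)² ≤ 2 M KL(μ ‖ π) · 2 C_MLSI 𝓔(g, g)`.
-/

open Finset

open InformationTheory Filter Topology

section

open Real

theorem sq_sub_one_le_two_mul_klFun {t M : ℝ} (ht : 0 ≤ t) (htM : t ≤ M) (hM : 1 ≤ M) :
    (t - 1) ^ 2 ≤ 2 * M * klFun t := by
  let ψ : ℝ → ℝ := fun s => 2 * M * klFun s - (s - 1) ^ 2
  have hψ : ∀ s, 0 < s → HasDerivAt ψ (2 * M * log s - 2 * (s - 1)) s := fun s hs =>
    (((hasDerivAt_klFun hs.ne').const_mul (2 * M)).sub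
      (((hasDerivAt_id s).sub_const 1).pow 2)).congr_deriv (by simp)
  have hψc : ContinuousOn ψ (Set.Icc 0 M) := by fun_prop
  have hψ1 : ψ 1 = 0 := by simp [ψ, klFun_one]
  suffices 0 ≤ ψ t by simp only [ψ] at this; linarith
  rcases le_total t 1 with h1 | h1
  · have hanti : AntitoneOn ψ (Set.Icc 0 1) := by
      refine antitoneOn_of_hasDerivWithinAt_nonpos (f' := fun s => 2 * M * log s - 2 * (s - 1))
        (convex_Icc 0 1)
        (hψc.mono (Set.Icc_subset_Icc_right hM)) ?_ ?_ <;> rw [interior_Icc]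
      · exact fun s hs => (hψ s hs.1).hasDerivWithinAt
      · intro s hs
        -- `M log s ≤ log s ≤ s - 1` on `(0, 1)`
        nlinarith [log_le_sub_one_of_pos hs.1,
          mul_nonpos_of_nonneg_of_nonpos (sub_nonneg.2 hM) (log_nonpos hs.1.le hs.2.le)]
    linarith [hanti ⟨ht, h1⟩ ⟨zero_le_one, le_rfl⟩ h1]
  · have hmono : MonotoneOn ψ (Set.Icc 1 M) := by
      refine monotoneOn_of_hasDerivWithinAt_nonneg (f' := fun s => 2 * M * log s - 2 * (s - 1))
        (convex_Icc 1 M)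
        (hψc.mono (Set.Icc_subset_Icc_left zero_le_one)) ?_ ?_ <;> rw [interior_Icc]
      · exact fun s hs => (hψ s (zero_lt_one.trans hs.1)).hasDerivWithinAt
      · intro s hs
        -- `M log s ≥ s log s ≥ s - 1` on `(1, M)`
        have hs0 : 0 < s := zero_lt_one.trans hs.1
        have hlog : s - 1 ≤ s * log s := by
          have := mul_le_mul_of_nonneg_left (one_sub_inv_le_log_of_pos hs0) hs0.le
          rwa [mul_one_sub, mul_inv_cancel₀ hs0.ne'] at this
        nlinarith [mul_nonneg (sub_nonneg.2 hs.2.le) (log_nonneg hs.1.le)]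
    linarith [hmono ⟨le_rfl, hM⟩ ⟨h1, htM⟩ h1]

theorem log_sub_mul_sub_mem_Icc {a b : ℝ} (ha : 0 < a) (hb : 0 < b) :
    (log b - log a) * (b - a) ∈ Set.Icc ((b - a) ^ 2 / max a b) ((b - a) ^ 2 / min a b) := by
  have hub : log b - log a ≤ (b - a) / a := by
    rw [← log_div hb.ne' ha.ne', sub_div, div_self ha.ne']
    exact log_le_sub_one_of_pos (by positivity)
  have hlb : (b - a) / b ≤ log b - log a := by
    rw [← log_div hb.ne' ha.ne', sub_div, div_self hb.ne', ← inv_div]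
    exact one_sub_inv_le_log_of_pos (by positivity)
  rcases le_total a b with hab | hab
  · rw [max_eq_right hab, min_eq_left hab, sq, ← div_mul_eq_mul_div, ← div_mul_eq_mul_div]
    have := sub_nonneg.2 hab
    exact ⟨mul_le_mul_of_nonneg_right hlb this, mul_le_mul_of_nonneg_right hub this⟩
  · rw [max_eq_left hab, min_eq_right hab, sq, ← div_mul_eq_mul_div, ← div_mul_eq_mul_div]
    have := sub_nonpos.2 hab
    exact ⟨mul_le_mul_of_nonpos_right hub this, mul_le_mul_of_nonpos_right hlb this⟩

end

theorem sq_sqrt_sInf_le {S : Set ℝ} (hS : ∀ v ∈ S, 0 ≤ v) {a : ℝ} (ha : a ∈ S) :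
    √(sInf S) ^ 2 ≤ a := by
  rw [Real.sq_sqrt (le_csInf ⟨a, ha⟩ hS)]
  exact csInf_le ⟨0, hS⟩ ha

theorem one_add_mul_mem_Icc {ι : Type*} {u : ι → ℝ} {ε N : ℝ} (huN : ∀ x, |u x| ≤ N) (hε : 0 ≤ ε)
    (x : ι) : 1 + ε * u x ∈ Set.Icc (1 - ε * N) (1 + ε * N) := by
  have h : |ε * u x| ≤ ε * N := by
    rw [abs_mul, abs_of_nonneg hε]; exact mul_le_mul_of_nonneg_left (huN x) hε
  constructor <;> linarith [(abs_le.1 h).1, (abs_le.1 h).2]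

section Dirichlet

variable {Ω : Type*} [Fintype Ω]

noncomputable def entropy (π f : Ω → ℝ) : ℝ :=
  ∑ x, π x * f x * Real.log (f x) - (∑ x, π x * f x) * Real.log (∑ x, π x * f x)

noncomputable def dirichletForm (w : Ω → Ω → ℝ) (f g : Ω → ℝ) : ℝ :=
  1 / 2 * ∑ x, ∑ y, (f y - f x) * (g y - g x) * w x y

def laplacian (c : Ω → Ω → ℝ) (g : Ω → ℝ) (x : Ω) : ℝ :=
  ∑ y, c x y * (g y - g x)

theorem sum_mul_klFun (π f : Ω → ℝ) :
    ∑ x, π x * klFun (f x) = ∑ x, π x * f x * Real.log (f x) + ∑ x, π x - ∑ x, π x * f x := by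
  simp only [klFun_apply, mul_sub, mul_add, ← mul_assoc, mul_one, sum_sub_distrib, sum_add_distrib]

theorem entropy_eq_sum_mul_klFun {π f : Ω → ℝ} (hπ : ∑ x, π x = 1) (hf : ∑ x, π x * f x = 1) :
    entropy π f = ∑ x, π x * klFun (f x) := by
  rw [entropy, sum_mul_klFun, hπ, hf, Real.log_one]
  ring

theorem sum_mul_log_div_eq_sum_mul_klFun {π μ : Ω → ℝ} (hπ : ∀ x, 0 < π x)
    (hsum : ∑ x, μ x = ∑ x, π x) :
    ∑ x, μ x * Real.log (μ x / π x) = ∑ x, π x * klFun (μ x / π x) := by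
  simp only [sum_mul_klFun, mul_div_cancel₀ _ (hπ _).ne', hsum]
  ring

theorem one_le_iSup_div {π μ : Ω → ℝ} (hπ : ∀ x, 0 < π x) (hπsum : ∑ x, π x = 1)
    (hμsum : ∑ x, μ x = 1) :
    1 ≤ ⨆ x, μ x / π x := by
  have hne : (univ : Finset Ω).Nonempty :=
    nonempty_of_sum_ne_zero (f := π) (by rw [hπsum]; exact one_ne_zero)
  obtain ⟨x, -, hx⟩ := exists_le_of_sum_le hne (hπsum.trans hμsum.symm).le
  exact ((one_le_div (hπ x)).2 hx).trans (le_ciSup (Finite.bddAbove_range (fun x => μ x / π x)) x)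

theorem dirichletForm_congr_offDiag {w w' : Ω → Ω → ℝ} (h : ∀ x y, x ≠ y → w x y = w' x y)
    (f g : Ω → ℝ) : dirichletForm w f g = dirichletForm w' f g := by
  unfold dirichletForm
  congr 1
  refine sum_congr rfl fun x _ => sum_congr rfl fun y _ => ?_
  rcases eq_or_ne x y with rfl | hxy
  · simp
  · rw [h x y hxy]

theorem dirichletForm_self_nonneg {w : Ω → Ω → ℝ} (hw : ∀ x y, 0 ≤ w x y) (f : Ω → ℝ) :
    0 ≤ dirichletForm w f f :=
  mul_nonneg (by norm_num) <| sum_nonneg fun x _ => sum_nonneg fun y _ =>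
    mul_nonneg (mul_self_nonneg _) (hw x y)

theorem mul_sub_eq_zero_of_dirichletForm_self_eq_zero {w : Ω → Ω → ℝ} (hw : ∀ x y, 0 ≤ w x y)
    {f : Ω → ℝ} (hf : dirichletForm w f f = 0) (x y : Ω) : w x y * (f y - f x) = 0 := by
  have hterm : ∀ x y, 0 ≤ (f y - f x) * (f y - f x) * w x y := fun x y =>
    mul_nonneg (mul_self_nonneg _) (hw x y)
  have hsum : ∑ x, ∑ y, (f y - f x) * (f y - f x) * w x y = 0 := by
    unfold dirichletForm at hf; linarith
  have := (sum_eq_zero_iff_of_nonneg fun y _ => hterm x y).1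
    ((sum_eq_zero_iff_of_nonneg fun x _ => sum_nonneg fun y _ => hterm x y).1 hsum x
      (mem_univ x)) y (mem_univ y)
  rcases mul_eq_zero.1 this with h | h
  · rw [mul_self_eq_zero.1 h, mul_zero]
  · rw [h, zero_mul]

theorem dirichletForm_one_add_mul (w : Ω → Ω → ℝ) (ε : ℝ) (u : Ω → ℝ) :
    dirichletForm w (fun x => 1 + ε * u x) (fun x => 1 + ε * u x) =
      ε ^ 2 * dirichletForm w u u := by
  simp only [dirichletForm, mul_sum]
  exact sum_congr rfl fun x _ => sum_congr rfl fun y _ => by ring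

theorem dirichletForm_log_le_div {w : Ω → Ω → ℝ} (hw : ∀ x y, 0 ≤ w x y) {f : Ω → ℝ} {δ : ℝ}
    (hδ : 0 < δ) (hf : ∀ x, δ ≤ f x) :
    dirichletForm w (fun x => Real.log (f x)) f ≤ dirichletForm w f f / δ := by
  rw [dirichletForm, dirichletForm, mul_div_assoc, sum_div]
  gcongr with x _
  rw [sum_div]
  gcongr with y _
  calc (Real.log (f y) - Real.log (f x)) * (f y - f x) * w x y
      ≤ (f y - f x) ^ 2 / min (f x) (f y) * w x y :=
        mul_le_mul_of_nonneg_right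
          (log_sub_mul_sub_mem_Icc (hδ.trans_le (hf x)) (hδ.trans_le (hf y))).2 (hw x y)
    _ ≤ (f y - f x) ^ 2 / δ * w x y := by
        gcongr
        · exact hw x y
        · exact le_min (hf x) (hf y)
    _ = _ := by ring

theorem dirichletForm_div_le_log {w : Ω → Ω → ℝ} (hw : ∀ x y, 0 ≤ w x y) {f : Ω → ℝ} {B : ℝ}
    (hf : ∀ x, 0 < f x) (hfB : ∀ x, f x ≤ B) :
    dirichletForm w f f / B ≤ dirichletForm w (fun x => Real.log (f x)) f := by
  rw [dirichletForm, dirichletForm, mul_div_assoc, sum_div]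
  gcongr with x _
  rw [sum_div]
  gcongr with y _
  calc (f y - f x) * (f y - f x) * w x y / B = (f y - f x) ^ 2 / B * w x y := by ring
    _ ≤ (f y - f x) ^ 2 / max (f x) (f y) * w x y := by
        gcongr
        · exact hw x y
        · exact lt_max_of_lt_left (hf x)
        · exact max_le (hfB x) (hfB y)
    _ ≤ _ := mul_le_mul_of_nonneg_right (log_sub_mul_sub_mem_Icc (hf x) (hf y)).1 (hw x y)

variable {c : Ω → Ω → ℝ}

theorem sum_mul_laplacian (hcsym : ∀ x y, c x y = c y x) (f g : Ω → ℝ) :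
    ∑ x, f x * laplacian c g x = - dirichletForm c f g := by
  have hswap : ∑ x, ∑ y, f y * (g y - g x) * c x y = - ∑ x, ∑ y, f x * (c x y * (g y - g x)) := by
    rw [sum_comm, ← sum_neg_distrib]
    refine sum_congr rfl fun x _ => ?_
    rw [← sum_neg_distrib]
    exact sum_congr rfl fun y _ => by rw [hcsym]; ring
  have hsplit : dirichletForm c f g = 1 / 2 * (∑ x, ∑ y, f y * (g y - g x) * c x y -
      ∑ x, ∑ y, f x * (c x y * (g y - g x))) := by
    simp only [dirichletForm, ← sum_sub_distrib]
    exact congrArg _ (sum_congr rfl fun x _ => sum_congr rfl fun y _ => by ring)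
  rw [hsplit, hswap]
  simp only [laplacian, mul_sum]
  ring

theorem eq_of_laplacian_eq_zero (hc0 : ∀ x y, 0 ≤ c x y) (hcsym : ∀ x y, c x y = c y x)
    {G : SimpleGraph Ω} (hG : G.Preconnected) (hadj : ∀ x y, G.Adj x y → 0 < c x y)
    {u : Ω → ℝ} (hu : ∀ x, laplacian c u x = 0) (x y : Ω) : u x = u y := by
  have hE : dirichletForm c u u = 0 := by
    simpa [hu] using (sum_mul_laplacian hcsym u u).symm
  have hedge : ∀ a b, G.Adj a b → u a = u b := fun a b hab => by
    have := mul_sub_eq_zero_of_dirichletForm_self_eq_zero hc0 hE a b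
    rw [mul_eq_zero, sub_eq_zero] at this
    exact (this.resolve_left (hadj a b hab).ne').symm
  obtain ⟨walk⟩ := hG x y
  induction walk with
  | nil => rfl
  | cons hab _ ih => exact (hedge _ _ hab).trans ih

noncomputable def laplacianLinearMap (c : Ω → Ω → ℝ) :
    EuclideanSpace ℝ Ω →ₗ[ℝ] EuclideanSpace ℝ Ω :=
  (EuclideanSpace.equiv Ω ℝ).symm.toLinearMap ∘ₗ
    LinearMap.pi (fun x => ∑ y, c x y •
      (LinearMap.proj (R := ℝ) (φ := fun _ : Ω => ℝ) y - LinearMap.proj x)) ∘ₗ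
      (EuclideanSpace.equiv Ω ℝ).toLinearMap

theorem laplacianLinearMap_apply (u : EuclideanSpace ℝ Ω) (x : Ω) :
    laplacianLinearMap c u x = laplacian c u x := by
  simp [laplacianLinearMap, laplacian]

theorem isSymmetric_laplacianLinearMap (hcsym : ∀ x y, c x y = c y x) :
    (laplacianLinearMap c).IsSymmetric := by
  intro u v
  simp only [PiLp.inner_apply, RCLike.inner_apply, conj_trivial, laplacianLinearMap_apply]
  simp_rw [mul_comm (laplacian c v _)]
  rw [sum_mul_laplacian hcsym, sum_mul_laplacian hcsym, dirichletForm, dirichletForm]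
  congr 2
  exact sum_congr rfl fun x _ => sum_congr rfl fun y _ => by ring

theorem exists_laplacian_eq (hc0 : ∀ x y, 0 ≤ c x y) (hcsym : ∀ x y, c x y = c y x)
    {G : SimpleGraph Ω} (hG : G.Connected) (hadj : ∀ x y, G.Adj x y → 0 < c x y)
    {v : Ω → ℝ} (hv : ∑ x, v x = 0) : ∃ g : Ω → ℝ, ∀ x, laplacian c g x = v x := by
  have hrange : WithLp.toLp 2 v ∈ LinearMap.range (laplacianLinearMap c) := by
    rw [← Submodule.orthogonal_orthogonal (LinearMap.range _),
      (isSymmetric_laplacianLinearMap hcsym).orthogonal_range, Submodule.mem_orthogonal']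
    intro u hu
    obtain ⟨x₀⟩ := hG.nonempty
    have hconst : ∀ x, u x = u x₀ := fun x => eq_of_laplacian_eq_zero hc0 hcsym hG.preconnected
      hadj (fun x => by rw [← laplacianLinearMap_apply, LinearMap.mem_ker.1 hu]; rfl) x x₀
    simp [PiLp.inner_apply, hconst, ← mul_sum, hv]
  obtain ⟨g, hg⟩ := hrange
  exact ⟨g, fun x => by rw [← laplacianLinearMap_apply, hg]⟩

theorem sq_Wc2_le_of_flux {μ ν : Ω → ℝ} (J : Ω → Ω → ℝ) (hJanti : ∀ x y, J x y = -J y x)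
    (hJc : ∀ x y, c x y = 0 → J x y = 0) (hJ : ∀ x, (ν x - μ x) + ∑ y, J x y = 0) :
    Wc2 c μ ν ^ 2 ≤ 1 / 2 * ∑ x, ∑ y, if 0 < c x y then J x y ^ 2 / c x y else 0 := by
  refine sq_sqrt_sInf_le (fun v hv => ?_) ⟨J, hJanti, hJc, hJ, rfl⟩
  obtain ⟨J, -, -, -, rfl⟩ := hv
  refine mul_nonneg (by norm_num) <| sum_nonneg fun x _ => sum_nonneg fun y _ => ?_
  split_ifs with h
  exacts [div_nonneg (sq_nonneg _) h.le, le_rfl]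

theorem sq_Wc2_le_dirichletForm (hc0 : ∀ x y, 0 ≤ c x y) (hcsym : ∀ x y, c x y = c y x)
    {μ ν g : Ω → ℝ} (hg : ∀ x, laplacian c g x = μ x - ν x) :
    Wc2 c μ ν ^ 2 ≤ dirichletForm c g g := by
  refine (sq_Wc2_le_of_flux (c := c) (fun x y => c x y * (g y - g x))
    (fun x y => by rw [hcsym]; ring) (fun x y h => by rw [h, zero_mul])
    (fun x => by show ν x - μ x + laplacian c g x = 0; rw [hg]; ring)).trans_eq ?_
  unfold dirichletForm
  refine congrArg _ (sum_congr rfl fun x _ => sum_congr rfl fun y _ => ?_)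
  split_ifs with h
  · field_simp
  · simp [le_antisymm (not_lt.1 h) (hc0 x y)]

variable {π u : Ω → ℝ} {ε N : ℝ}

theorem sq_mul_sum_le_entropy_one_add_mul (hπ : ∀ x, 0 ≤ π x) (hπsum : ∑ x, π x = 1)
    (hu : ∑ x, π x * u x = 0) (huN : ∀ x, |u x| ≤ N) (hε : 0 ≤ ε)
    (hεN : ε * N ≤ 1) :
    ε ^ 2 * ∑ x, π x * u x ^ 2 ≤ 2 * (1 + ε * N) * entropy π (fun x => 1 + ε * u x) := by
  have hnorm : ∑ x, π x * (1 + ε * u x) = 1 := by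
    simp only [mul_add, mul_one, mul_left_comm (π _) ε, sum_add_distrib, ← mul_sum, hu, hπsum]
    ring
  rw [entropy_eq_sum_mul_klFun hπsum hnorm, mul_sum, mul_sum]
  refine sum_le_sum fun x _ => ?_
  have hx := one_add_mul_mem_Icc huN hε x
  have := sq_sub_one_le_two_mul_klFun (t := 1 + ε * u x) (M := 1 + ε * N) (by linarith [hx.1])
    hx.2 (by linarith [hx.1, hx.2])
  rw [add_sub_cancel_left] at this
  calc ε ^ 2 * (π x * u x ^ 2) = π x * (ε * u x) ^ 2 := by ring
    _ ≤ π x * (2 * (1 + ε * N) * klFun (1 + ε * u x)) := mul_le_mul_of_nonneg_left this (hπ x)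
    _ = _ := by ring

theorem dirichletForm_log_one_add_mul_div_sq_mem_Icc {w : Ω → Ω → ℝ} (hw : ∀ x y, 0 ≤ w x y)
    (huN : ∀ x, |u x| ≤ N) (hε : 0 < ε) (hεN : ε * N < 1) :
    dirichletForm w (fun x => Real.log (1 + ε * u x)) (fun x => 1 + ε * u x) / ε ^ 2 ∈
      Set.Icc (dirichletForm w u u / (1 + ε * N)) (dirichletForm w u u / (1 - ε * N)) := by
  have hx := one_add_mul_mem_Icc huN hε.le
  have hε2 : 0 < ε ^ 2 := by positivity
  have hlow := dirichletForm_div_le_log hw (f := fun x => 1 + ε * u x) (B := 1 + ε * N)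
    (fun x => by linarith [(hx x).1]) (fun x => (hx x).2)
  have hup := dirichletForm_log_le_div hw (f := fun x => 1 + ε * u x) (δ := 1 - ε * N)
    (by linarith) (fun x => (hx x).1)
  rw [dirichletForm_one_add_mul] at hlow hup
  constructor
  · rwa [le_div_iff₀ hε2, div_mul_eq_mul_div, mul_comm]
  · rwa [div_le_iff₀ hε2, div_mul_eq_mul_div, mul_comm]

theorem eventually_pos_mul_lt_one (N : ℝ) : ∀ᶠ ε in 𝓝[>] (0 : ℝ), 0 < ε ∧ ε * N < 1 := by
  have : ∀ᶠ ε in 𝓝 (0 : ℝ), ε * N < 1 :=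
    (continuous_id.mul continuous_const).continuousAt.eventually_lt continuousAt_const (by simp)
  filter_upwards [self_mem_nhdsWithin, nhdsWithin_le_nhds this] with ε h₁ h₂ using ⟨h₁, h₂⟩

theorem tendsto_dirichletForm_log_one_add_mul_div_sq {w : Ω → Ω → ℝ} (hw : ∀ x y, 0 ≤ w x y)
    (huN : ∀ x, |u x| ≤ N) :
    Tendsto (fun ε => dirichletForm w (fun x => Real.log (1 + ε * u x))
      (fun x => 1 + ε * u x) / ε ^ 2) (𝓝[>] 0) (𝓝 (dirichletForm w u u)) := by
  have hlim : ∀ s : ℝ, Tendsto (fun ε => dirichletForm w u u / (1 + s * ε * N)) (𝓝[>] 0)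
      (𝓝 (dirichletForm w u u)) := fun s => by
    have : ContinuousAt (fun ε : ℝ => dirichletForm w u u / (1 + s * ε * N)) 0 :=
      continuousAt_const.div (by fun_prop) (by simp)
    simpa using this.tendsto.mono_left nhdsWithin_le_nhds
  refine tendsto_of_tendsto_of_tendsto_of_le_of_le' (by simpa using hlim 1)
    (by simpa [sub_eq_add_neg] using hlim (-1)) ?_ ?_ <;>
  filter_upwards [eventually_pos_mul_lt_one N] with ε hε
  · exact (dirichletForm_log_one_add_mul_div_sq_mem_Icc hw huN hε.1 hε.2).1
  · exact (dirichletForm_log_one_add_mul_div_sq_mem_Icc hw huN hε.1 hε.2).2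

theorem variance_le_two_mul_dirichletForm_of_entropy_le {w : Ω → Ω → ℝ} {C : ℝ}
    (hπ : ∀ x, 0 ≤ π x) (hπsum : ∑ x, π x = 1) (hw : ∀ x y, 0 ≤ w x y)
    (hMLSI : ∀ f : Ω → ℝ, (∀ x, 0 < f x) →
      entropy π f ≤ C * dirichletForm w (fun x => Real.log (f x)) f)
    (h : Ω → ℝ) :
    ∑ x, π x * (h x - ∑ y, π y * h y) ^ 2 ≤ 2 * C * dirichletForm w h h := by
  set u : Ω → ℝ := fun x => h x - ∑ y, π y * h y
  have hu : ∑ x, π x * u x = 0 := by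
    simp only [u, mul_sub, sum_sub_distrib, ← sum_mul, hπsum, one_mul, sub_self]
  have hEu : dirichletForm w u u = dirichletForm w h h := by
    simp only [dirichletForm, u, sub_sub_sub_cancel_right]
  have huN : ∀ x, |u x| ≤ ∑ y, |u y| := fun x =>
    single_le_sum (f := fun y => |u y|) (fun y _ => abs_nonneg _) (mem_univ x)
  set N := ∑ y, |u y|
  have hbound : ∀ᶠ ε in 𝓝[>] (0 : ℝ), ∑ x, π x * u x ^ 2 ≤ 2 * (1 + ε * N) * C *
      (dirichletForm w (fun x => Real.log (1 + ε * u x)) (fun x => 1 + ε * u x) / ε ^ 2) := by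
    filter_upwards [eventually_pos_mul_lt_one N] with ε ⟨hε, hεN⟩
    have hpos : ∀ x, 0 < 1 + ε * u x := fun x => by
      linarith [(one_add_mul_mem_Icc huN hε.le x).1]
    have := (sq_mul_sum_le_entropy_one_add_mul hπ hπsum hu huN hε.le hεN.le).trans
      (mul_le_mul_of_nonneg_left (hMLSI _ hpos) (by positivity))
    rw [← le_div_iff₀' (by positivity)] at this
    exact this.trans_eq (by ring)
  have hfactor : Tendsto (fun ε : ℝ => 2 * (1 + ε * N) * C) (𝓝[>] 0) (𝓝 (2 * C)) := by
    have : ContinuousAt (fun ε : ℝ => 2 * (1 + ε * N) * C) 0 := by fun_prop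
    simpa using this.tendsto.mono_left nhdsWithin_le_nhds
  rw [← hEu]
  exact ge_of_tendsto (hfactor.mul (tendsto_dirichletForm_log_one_add_mul_div_sq hw huN)) hbound

theorem dirichletForm_le_of_variance_le {μ g : Ω → ℝ} {C : ℝ}
    (hπ : ∀ x, 0 < π x) (hπsum : ∑ x, π x = 1) (hμ : ∀ x, 0 ≤ μ x) (hμsum : ∑ x, μ x = 1)
    (hc0 : ∀ x y, 0 ≤ c x y) (hcsym : ∀ x y, c x y = c y x)
    (hvar : ∑ x, π x * (g x - ∑ y, π y * g y) ^ 2 ≤ 2 * C * dirichletForm c g g)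
    (hg : ∀ x, laplacian c g x = μ x - π x) :
    dirichletForm c g g ≤ 4 * C * (⨆ x, μ x / π x) * ∑ x, μ x * Real.log (μ x / π x) := by
  set A := dirichletForm c g g
  set M := ⨆ x, μ x / π x
  set m := ∑ y, π y * g y
  have hM : 1 ≤ M := one_le_iSup_div hπ hπsum hμsum
  rw [sum_mul_log_div_eq_sum_mul_klFun hπ (hμsum.trans hπsum.symm)]
  have hF : ∑ x, π x * (μ x / π x - 1) ^ 2 ≤ 2 * M * ∑ x, π x * klFun (μ x / π x) := by
    rw [mul_sum]
    refine sum_le_sum fun x _ => ?_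
    have := sq_sub_one_le_two_mul_klFun (div_nonneg (hμ x) (hπ x).le)
      (le_ciSup (Finite.bddAbove_range (fun x => μ x / π x)) x) hM
    nlinarith [hπ x]
  have hA : A = ∑ x, π x * (1 - μ x / π x) * (g x - m) := by
    have hgreen : ∑ x, (π x - μ x) * g x = A := by
      rw [← neg_neg A, ← sum_mul_laplacian hcsym, ← sum_neg_distrib]
      exact sum_congr rfl fun x _ => by rw [hg]; ring
    have hmean : ∑ x, (π x - μ x) * m = 0 := by
      rw [← sum_mul, sum_sub_distrib, hπsum, hμsum, sub_self, zero_mul]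
    simp only [mul_one_sub, mul_div_cancel₀ _ (hπ _).ne', mul_sub _ (g _), sum_sub_distrib, hgreen,
      hmean, sub_zero]
  have hCS : A ^ 2 ≤ (∑ x, π x * (μ x / π x - 1) ^ 2) * ∑ x, π x * (g x - m) ^ 2 := by
    rw [hA]
    refine sum_sq_le_sum_mul_sum_of_sq_le_mul _ (fun x _ => mul_nonneg (hπ x).le (sq_nonneg _))
      (fun x _ => mul_nonneg (hπ x).le (sq_nonneg _)) fun x _ => le_of_eq (by ring)
  rcases (dirichletForm_self_nonneg hc0 g).eq_or_lt with hA0 | hA0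
  · have hμπ : ∀ x, μ x = π x := fun x => by
      have := hg x
      rw [laplacian, sum_eq_zero fun y _ =>
        mul_sub_eq_zero_of_dirichletForm_self_eq_zero hc0 hA0.symm x y] at this
      linarith
    simp [hμπ, div_self (hπ _).ne', klFun_one, A, ← hA0]
  · refine le_of_mul_le_mul_right ?_ hA0
    calc A * A = A ^ 2 := (sq A).symm
      _ ≤ (2 * M * ∑ x, π x * klFun (μ x / π x)) * (2 * C * A) :=
        mul_le_mul hF hvar (sum_nonneg fun x _ => mul_nonneg (hπ x).le (sq_nonneg _))
          ((sum_nonneg fun x _ => mul_nonneg (hπ x).le (sq_nonneg _)).trans hF) |> hCS.trans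
      _ = _ := by ring

end Dirichlet

theorem transport_entropy_inequality_general {Ω : Type*} [Fintype Ω] [DecidableEq Ω]
    (π : Ω → ℝ) (p : Ω → Ω → ℝ)
    (hπpos : ∀ x, 0 < π x) (hπsum : ∑ x, π x = 1)
    (hp : ∀ x y, x ≠ y → 0 ≤ p x y)
    (hrev : ∀ x y, π x * p x y = π y * p y x)
    (hconn : (kernelGraph p).Connected)
    (c : Ω → Ω → ℝ) (hc : ∀ x y, c x y = if x = y then 0 else π x * p x y)
    (CMLSI : ℝ)
    (hMLSI : ∀ f : Ω → ℝ, (∀ x, 0 < f x) →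
      (∑ x, π x * f x * Real.log (f x)) -
          (∑ x, π x * f x) * Real.log (∑ x, π x * f x) ≤
        CMLSI * ((1 / 2) * ∑ x, ∑ y,
          (Real.log (f y) - Real.log (f x)) * (f y - f x) * (π x * p x y))) :
    ∀ μ : Ω → ℝ, (∀ x, 0 ≤ μ x) → (∑ x, μ x = 1) →
      Wc2 c μ π ^ 2 ≤
        4 * CMLSI * (⨆ x, μ x / π x) * ∑ x, μ x * Real.log (μ x / π x) := by
  intro μ hμ hμsum
  have hc0 : ∀ x y, 0 ≤ c x y := fun x y => by
    rw [hc]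
    split_ifs with hxy
    exacts [le_rfl, mul_nonneg (hπpos x).le (hp x y hxy)]
  have hcsym : ∀ x y, c x y = c y x := fun x y => by
    rcases eq_or_ne x y with rfl | hxy
    · rfl
    · rw [hc, hc, if_neg hxy, if_neg hxy.symm, hrev]
  have hadj : ∀ x y, (kernelGraph p).Adj x y → 0 < c x y := by
    rintro x y ⟨hxy, hpxy | hpyx⟩
    · rw [hc, if_neg hxy]
      exact mul_pos (hπpos x) hpxy
    · rw [hcsym, hc, if_neg hxy.symm]
      exact mul_pos (hπpos y) hpyx
  have hentropy : ∀ f : Ω → ℝ, (∀ x, 0 < f x) →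
      entropy π f ≤ CMLSI * dirichletForm c (fun x => Real.log (f x)) f := fun f hf => by
    rw [dirichletForm_congr_offDiag (w' := fun x y => π x * p x y)
      (fun x y hxy => by rw [hc, if_neg hxy])]
    exact hMLSI f hf
  obtain ⟨g, hg⟩ := exists_laplacian_eq hc0 hcsym hconn hadj (v := fun x => μ x - π x)
    (by rw [sum_sub_distrib, hμsum, hπsum, sub_self])
  exact (sq_Wc2_le_dirichletForm hc0 hcsym hg).trans <|
    dirichletForm_le_of_variance_le hπpos hπsum hμ hμsum hc0 hcsym
      (variance_le_two_mul_dirichletForm_of_entropy_le (fun x => (hπpos x).le) hπsum hc0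
        hentropy g) hg

/-- Transport–entropy inequality: a modified log-Sobolev inequality for `p` implies
`W_{c,2}(μ, π)² ≤ 4 C_MLSI · ‖dμ/dπ‖_∞ · KL(μ ‖ π)`. -/
theorem transport_entropy_inequality {Ω : Type*} [Fintype Ω] [DecidableEq Ω] [Nonempty Ω]
    (π : Ω → ℝ) (p : Ω → Ω → ℝ)
    (hπpos : ∀ x, 0 < π x) (hπsum : ∑ x, π x = 1)
    (hp : ∀ x y, x ≠ y → 0 ≤ p x y) (hrow : ∀ x, ∑ y, p x y = 0)
    (hrev : ∀ x y, π x * p x y = π y * p y x)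
    (hconn : (kernelGraph p).Connected)
    (c : Ω → Ω → ℝ) (hc : ∀ x y, c x y = if x = y then 0 else π x * p x y)
    (CMLSI : ℝ)
    (hMLSI : ∀ f : Ω → ℝ, (∀ x, 0 < f x) →
      (∑ x, π x * f x * Real.log (f x)) -
          (∑ x, π x * f x) * Real.log (∑ x, π x * f x) ≤
        CMLSI * ((1 / 2) * ∑ x, ∑ y,
          (Real.log (f y) - Real.log (f x)) * (f y - f x) * (π x * p x y))) :
    ∀ μ : Ω → ℝ, (∀ x, 0 ≤ μ x) → (∑ x, μ x = 1) →
      Wc2 c μ π ^ 2 ≤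
        4 * CMLSI * (⨆ x, μ x / π x) * ∑ x, μ x * Real.log (μ x / π x) :=
  transport_entropy_inequality_general π p hπpos hπsum hp hrev hconn c hc CMLSI hMLSI
end

section
/- Let n ≥ 1 be an integer and β ≥ 0 a real number. Let Ω̄ = {−n, −n+2, …, n−2, n} and for m ∈ Ω̄ define w(m) = C(n, (n+m)/2) · exp(β·m²/(2n)), where C denotes the binomial coefficient. Then the sequence of values w(m) over nonnegative m ∈ Ω̄ is unimodal: there exists m* ∈ Ω̄ with 0 ≤ m* ≤ n such that for all m ∈ Ω̄ with 0 ≤ m and m + 2 ≤ m*, w(m) ≤ w(m+2), and for all m ∈ Ω̄ with m* ≤ m ≤ n − 2, w(m+2) ≤ w(m). -/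
/-!
Consecutive weights have ratio
`w (m + 2) / w m = (n - m) / (n + m + 2) * exp (2β (m + 1) / n)`, so with `x = (m + 1) / (n + 1)`
the weight decreases at `m` exactly when `β (n + 1) / n * x ≤ artanh x`. The series
`artanh x / x = ∑ x ^ (2k) / (2k + 1)` is increasing on `(0, 1)`, so once the weights start
decreasing they keep decreasing, and the first decreasing step is the mode.
-/

open Real

namespace Real

theorem hasSum_artanh {x : ℝ} (hx : |x| < 1) :
    HasSum (fun k : ℕ => x ^ (2 * k + 1) / (2 * k + 1)) (artanh x) := by
  obtain ⟨hx₁, hx₂⟩ := abs_lt.mp hx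
  rw [artanh_eq_half_log ⟨hx₁.le, hx₂.le⟩, log_div (by linarith) (by linarith)]
  have hterm (k : ℕ) :
      x ^ (2 * k + 1) / (2 * k + 1) = 1 / 2 * (2 * (1 / (2 * k + 1)) * x ^ (2 * k + 1)) := by
    ring
  simpa only [hterm] using (hasSum_log_sub_log_of_abs_lt_one hx).mul_left (1 / 2)

theorem artanh_div_le_artanh_div {x y : ℝ} (hx : 0 < x) (hxy : x ≤ y) (hy : y < 1) :
    artanh x / x ≤ artanh y / y := by
  have hasSum_div {z : ℝ} (hz₀ : 0 < z) (hz₁ : z < 1) :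
      HasSum (fun k : ℕ => z ^ (2 * k) / (2 * k + 1)) (artanh z / z) := by
    have hterm (k : ℕ) : z ^ (2 * k) / (2 * k + 1) = z ^ (2 * k + 1) / (2 * k + 1) / z := by
      rw [pow_succ]
      field_simp
    simpa only [hterm] using (hasSum_artanh (abs_lt.mpr ⟨by linarith, hz₁⟩)).div_const z
  refine hasSum_le (fun k => ?_) (hasSum_div hx (hxy.trans_lt hy)) (hasSum_div (hx.trans_le hxy) hy)
  gcongr

theorem mul_le_artanh_of_le {c x y : ℝ} (hx : 0 < x) (hxy : x ≤ y) (hy : y < 1)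
    (h : c * x ≤ artanh x) : c * y ≤ artanh y := by
  rw [← le_div_iff₀ hx] at h
  rw [← le_div_iff₀ (hx.trans_le hxy)]
  exact h.trans (artanh_div_le_artanh_div hx hxy hy)

theorem exp_two_mul_artanh {x : ℝ} (hx : x ∈ Set.Ioo (-1) 1) :
    exp (2 * artanh x) = (1 + x) / (1 - x) := by
  rw [two_mul, exp_add, exp_artanh hx, mul_self_sqrt (div_nonneg (by grind) (by grind))]

end Real

theorem exists_parity_threshold {n : ℤ} (hn : 0 ≤ n) {P : ℤ → Prop}
    (hP : ∀ a b, a % 2 = n % 2 → b % 2 = n % 2 → 0 ≤ a → a ≤ b → b ≤ n - 2 → P a → P b) :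
    ∃ t, 0 ≤ t ∧ t ≤ n ∧ t % 2 = n % 2 ∧
      (∀ m, m % 2 = n % 2 → 0 ≤ m → m + 2 ≤ t → ¬ P m) ∧
      (∀ m, m % 2 = n % 2 → t ≤ m → m ≤ n - 2 → P m) := by
  obtain ⟨t, ⟨ht₀, htn, htpar, htP⟩, hleast⟩ := Int.exists_least_of_bdd
    (P := fun t => 0 ≤ t ∧ t ≤ n ∧ t % 2 = n % 2 ∧ (t ≤ n - 2 → P t))
    ⟨0, fun _ hz => hz.1⟩ ⟨n, hn, le_rfl, rfl, by omega⟩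
  refine ⟨t, ht₀, htn, htpar, fun m hm hm₀ hmt hPm => ?_,
    fun m hm htm hmn => hP t m htpar hm ht₀ htm hmn (htP (by omega))⟩
  have := hleast m ⟨hm₀, by omega, hm, fun _ => hPm⟩
  omega

noncomputable def magnetizationWeight (n : ℕ) (β : ℝ) (m : ℤ) : ℝ :=
  (n.choose (((n : ℤ) + m) / 2).toNat : ℝ) * exp (β * (m : ℝ) ^ 2 / (2 * n))

namespace magnetizationWeight

variable {n : ℕ} {β : ℝ} {m : ℤ}

theorem pos (h₀ : -(n : ℤ) ≤ m) (h₁ : m ≤ n) : 0 < magnetizationWeight n β m := by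
  have hk : (((n : ℤ) + m) / 2).toNat ≤ n := by omega
  unfold magnetizationWeight
  have := Nat.choose_pos hk
  positivity

theorem add_two (hpar : m % 2 = n % 2) (h₀ : -(n : ℤ) ≤ m) (h₂ : m ≤ n - 2) :
    (n + m + 2 : ℝ) * magnetizationWeight n β (m + 2) =
      (n - m) * exp (2 * β * (m + 1) / n) * magnetizationWeight n β m := by
  set k := (((n : ℤ) + m) / 2).toNat with hk_def
  have hk : 2 * (k : ℤ) = n + m := by omega
  have hk_succ : (((n : ℤ) + (m + 2)) / 2).toNat = k + 1 := by omega
  have hkR : (2 * k : ℝ) = n + m := by exact_mod_cast hk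
  have hchoose : (n.choose (k + 1) : ℝ) * (k + 1) = n.choose k * (n - k) := by
    have h := congrArg (Nat.cast : ℕ → ℝ) (Nat.choose_succ_right_eq n k)
    push_cast [Nat.cast_sub (by omega : k ≤ n)] at h
    exact h
  have hn : (n : ℝ) ≠ 0 := by norm_cast; omega
  have hexp : exp (β * ((m + 2 : ℤ) : ℝ) ^ 2 / (2 * n)) =
      exp (β * (m : ℝ) ^ 2 / (2 * n)) * exp (2 * β * (m + 1) / n) := by
    rw [← exp_add]
    congr 1
    field_simp
    push_cast
    ring
  unfold magnetizationWeight
  rw [hk_succ, hexp, ← hk_def]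
  linear_combination (2 * exp (β * (m : ℝ) ^ 2 / (2 * n)) * exp (2 * β * (m + 1) / n)) * hchoose
    - (n.choose (k + 1) + n.choose k : ℝ) * exp (β * (m : ℝ) ^ 2 / (2 * n)) *
      exp (2 * β * (m + 1) / n) * hkR

theorem add_two_le_iff (hpar : m % 2 = n % 2) (h₀ : 0 ≤ m) (h₂ : m ≤ n - 2) :
    magnetizationWeight n β (m + 2) ≤ magnetizationWeight n β m ↔
      β * (n + 1) / n * ((m + 1) / (n + 1)) ≤ artanh ((m + 1) / (n + 1)) := by
  have hn : (2 : ℝ) ≤ n := by exact_mod_cast (by omega : 2 ≤ (n : ℤ))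
  have hm₀ : (0 : ℝ) ≤ m := by exact_mod_cast h₀
  have hm₂ : (m : ℝ) ≤ n - 2 := by exact_mod_cast h₂
  have hx : ((m + 1) / (n + 1) : ℝ) ∈ Set.Ioo (-1) 1 := by
    constructor
    · rw [lt_div_iff₀ (by linarith)]; linarith
    · rw [div_lt_one (by linarith)]; linarith
  have hratio : (1 + (m + 1) / (n + 1)) / (1 - (m + 1) / (n + 1)) = (n + m + 2 : ℝ) / (n - m) := by
    field_simp
    ring
  have hscale : 2 * β * (m + 1) / n = 2 * (β * (n + 1) / n * ((m + 1) / (n + 1))) := by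
    field_simp
  rw [← mul_le_mul_iff_of_pos_left (by linarith : (0 : ℝ) < n + m + 2), add_two hpar (by omega) h₂,
    mul_le_mul_iff_of_pos_right (pos (by omega) (by omega)), ← le_div_iff₀' (by linarith),
    ← hratio, ← exp_two_mul_artanh hx, exp_le_exp, hscale, mul_le_mul_iff_of_pos_left two_pos]

theorem add_two_le_of_le {a b : ℤ} (ha : a % 2 = n % 2) (hb : b % 2 = n % 2) (ha₀ : 0 ≤ a)
    (hab : a ≤ b) (hb₂ : b ≤ n - 2)
    (h : magnetizationWeight n β (a + 2) ≤ magnetizationWeight n β a) :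
    magnetizationWeight n β (b + 2) ≤ magnetizationWeight n β b := by
  have hn : (2 : ℝ) ≤ n := by exact_mod_cast (by omega : 2 ≤ (n : ℤ))
  have hb₂' : (b : ℝ) ≤ n - 2 := by exact_mod_cast hb₂
  rw [add_two_le_iff ha ha₀ (hab.trans hb₂)] at h
  rw [add_two_le_iff hb (ha₀.trans hab) hb₂]
  refine mul_le_artanh_of_le (by positivity) (by gcongr) ?_ h
  rw [div_lt_one (by linarith)]
  linarith

end magnetizationWeight

theorem meanFieldIsing_projected_unimodal_general (n : ℕ) (β : ℝ)
    (w : ℤ → ℝ)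
    (hw : ∀ m : ℤ, w m = (n.choose (((n : ℤ) + m) / 2).toNat : ℝ) *
      Real.exp (β * (m : ℝ) ^ 2 / (2 * n))) :
    ∃ mstar : ℤ, 0 ≤ mstar ∧ mstar ≤ (n : ℤ) ∧ mstar % 2 = (n : ℤ) % 2 ∧
      (∀ m : ℤ, m % 2 = (n : ℤ) % 2 → 0 ≤ m → m + 2 ≤ mstar → w m ≤ w (m + 2)) ∧
      (∀ m : ℤ, m % 2 = (n : ℤ) % 2 → mstar ≤ m → m ≤ (n : ℤ) - 2 → w (m + 2) ≤ w m) := by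
  obtain rfl : w = magnetizationWeight n β := funext hw
  obtain ⟨t, ht₀, htn, htpar, hincreasing, hdecreasing⟩ :=
    exists_parity_threshold (Int.natCast_nonneg n)
      (P := fun m => magnetizationWeight n β (m + 2) ≤ magnetizationWeight n β m)
      fun _ _ => magnetizationWeight.add_two_le_of_le
  exact ⟨t, ht₀, htn, htpar, fun m hm hm₀ hmt => (not_le.mp (hincreasing m hm hm₀ hmt)).le,
    hdecreasing⟩

/-- Unimodality of the magnetization pushforward of the mean-field Ising model
at any inverse temperature `β ≥ 0`. -/
theorem meanFieldIsing_projected_unimodal (n : ℕ) (hn : 1 ≤ n) (β : ℝ) (hβ : 0 ≤ β)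
    (w : ℤ → ℝ)
    (hw : ∀ m : ℤ, w m = (n.choose (((n : ℤ) + m) / 2).toNat : ℝ) *
      Real.exp (β * (m : ℝ) ^ 2 / (2 * n))) :
    ∃ mstar : ℤ, 0 ≤ mstar ∧ mstar ≤ (n : ℤ) ∧ mstar % 2 = (n : ℤ) % 2 ∧
      (∀ m : ℤ, m % 2 = (n : ℤ) % 2 → 0 ≤ m → m + 2 ≤ mstar → w m ≤ w (m + 2)) ∧
      (∀ m : ℤ, m % 2 = (n : ℤ) % 2 → mstar ≤ m → m ≤ (n : ℤ) - 2 → w (m + 2) ≤ w m) :=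
  meanFieldIsing_projected_unimodal_general n β w hw
end

section
/- Let n ≥ 1 be an integer and let Ω̄̄ = {m ∈ ℤ : 0 ≤ m ≤ n, m ≡ n (mod 2)}. Let π be a strictly positive probability vector on Ω̄̄ that is unimodal: there exists m* ∈ Ω̄̄ such that π(m) ≤ π(m+2) whenever m, m+2 ∈ Ω̄̄ with m+2 ≤ m*, and π(m+2) ≤ π(m) whenever m, m+2 ∈ Ω̄̄ with m ≥ m*. Let c assign to each edge {m, m+2} (m, m+2 ∈ Ω̄̄) a value with c(m, m+2) ≥ (1/(2n))·min(π(m), π(m+2)). Then for every f : Ω̄̄ → ℝ, Var_π[f] ≤ n³ · Σ_{m : m, m+2 ∈ Ω̄̄} c(m, m+2)·(f(m+2) − f(m))². -/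
/-!
Index the folded space by `k ↦ 2k + n % 2`, `0 ≤ k ≤ K = n / 2`, which turns the chain into a
walk on the path `{0, …, K}`, and write `2 Var_π f = ∑ᵢ ∑ⱼ πᵢ πⱼ (fᵢ - fⱼ)²`. For `i < j`,
Cauchy–Schwarz along the path bounds `(fⱼ - fᵢ)²` by `K ∑_{i ≤ k < j} (f_{k+1} - f_k)²`, and
unimodality (no valleys) gives `πᵢ πⱼ ≤ min πᵢ πⱼ · (πᵢ + πⱼ) ≤ min π_k π_{k+1} · (πᵢ + πⱼ)` for
every edge `k` between `i` and `j`. Summing over `i, j` gives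
`Var_π f ≤ K (K + 1) ∑_k min π_k π_{k+1} (f_{k+1} - f_k)²`, and `K (K + 1) ≤ n² / 2 = n³ / (2n)`.
-/

open Finset

theorem two_mul_sum_mul_sq_sub_sq_eq {ι R : Type*} [CommRing R] (s : Finset ι) (p g : ι → R)
    (hp : ∑ i ∈ s, p i = 1) :
    2 * ((∑ i ∈ s, p i * g i ^ 2) - (∑ i ∈ s, p i * g i) ^ 2) =
      ∑ i ∈ s, ∑ j ∈ s, p i * p j * (g i - g j) ^ 2 := by
  have expand : ∀ i j, p i * p j * (g i - g j) ^ 2 =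
      p i * g i ^ 2 * p j + p i * (p j * g j ^ 2) - 2 * (p i * g i) * (p j * g j) := by
    intros; ring
  simp only [expand, sum_sub_distrib, sum_add_distrib, ← mul_sum, ← sum_mul, hp]
  ring

theorem sum_sum_add_eq {ι R : Type*} [CommRing R] (s : Finset ι) (p : ι → R)
    (hp : ∑ i ∈ s, p i = 1) : ∑ i ∈ s, ∑ j ∈ s, (p i + p j) = 2 * #s := by
  simp only [sum_add_distrib, sum_const, nsmul_eq_mul, ← mul_sum, hp]
  ring

theorem sq_sub_le_mul_sum_Ico_sq (g : ℕ → ℝ) {i j : ℕ} (hij : i ≤ j) :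
    (g j - g i) ^ 2 ≤ (j - i : ℕ) * ∑ k ∈ Ico i j, (g (k + 1) - g k) ^ 2 := by
  rw [← sum_Ico_sub g hij, ← Nat.card_Ico]
  exact sq_sum_le_card_mul_sum_sq

theorem mul_le_min_mul_add {a b : ℝ} (ha : 0 ≤ a) (hb : 0 ≤ b) :
    a * b ≤ min a b * (a + b) := by
  rw [← min_mul_max a b]
  exact mul_le_mul_of_nonneg_left (max_le_add_of_nonneg ha hb) (le_min ha hb)

theorem min_le_of_monotoneOn_of_antitoneOn {p : ℕ → ℝ} {K ks : ℕ}
    (hmono : MonotoneOn p (Set.Iic ks)) (hanti : AntitoneOn p (Set.Icc ks K))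
    {i k j : ℕ} (hik : i ≤ k) (hkj : k ≤ j) (hjK : j ≤ K) :
    min (p i) (p j) ≤ p k := by
  rcases le_total k ks with hk | hk
  · exact (min_le_left _ _).trans (hmono (hik.trans hk) hk hik)
  · exact (min_le_right _ _).trans (hanti ⟨hk, hkj.trans hjK⟩ ⟨hk.trans hkj, hjK⟩ hkj)

section PathPoincare

variable {K : ℕ} {p : ℕ → ℝ} (g : ℕ → ℝ)

theorem mul_le_add_mul_min_of_Ico (hp : ∀ i ≤ K, 0 ≤ p i)
    (hvalley : ∀ i k j, i ≤ k → k ≤ j → j ≤ K → min (p i) (p j) ≤ p k)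
    {i j k : ℕ} (hj : j ≤ K) (hk : k ∈ Ico i j) :
    p i * p j ≤ (p i + p j) * min (p k) (p (k + 1)) := by
  obtain ⟨hik, hkj⟩ := mem_Ico.mp hk
  have hpi := hp i (by omega)
  have hpj := hp j hj
  calc p i * p j ≤ min (p i) (p j) * (p i + p j) := mul_le_min_mul_add hpi hpj
    _ ≤ min (p k) (p (k + 1)) * (p i + p j) := by
        refine mul_le_mul_of_nonneg_right ?_ (add_nonneg hpi hpj)
        exact le_min (hvalley i k j hik hkj.le hj) (hvalley i (k + 1) j (by omega) hkj hj)
    _ = _ := mul_comm _ _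

theorem mul_mul_sub_sq_le_mul_sum_min (hp : ∀ i ≤ K, 0 ≤ p i)
    (hvalley : ∀ i k j, i ≤ k → k ≤ j → j ≤ K → min (p i) (p j) ≤ p k)
    {i j : ℕ} (hi : i ≤ K) (hj : j ≤ K) :
    p i * p j * (g i - g j) ^ 2 ≤
      K * (p i + p j) * ∑ k ∈ range K, min (p k) (p (k + 1)) * (g (k + 1) - g k) ^ 2 := by
  wlog hij : i ≤ j generalizing i j
  · simpa only [mul_comm (p i), add_comm (p i), sub_sq_comm (g i)] using this hj hi (by omega)
  have hpij : 0 ≤ p i + p j := add_nonneg (hp i hi) (hp j hj)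
  have hterm : ∀ k ∈ range K,
      0 ≤ (p i + p j) * (min (p k) (p (k + 1)) * (g (k + 1) - g k) ^ 2) := by
    intro k hk
    have hk := mem_range.mp hk
    exact mul_nonneg hpij (mul_nonneg (le_min (hp k hk.le) (hp (k + 1) hk)) (sq_nonneg _))
  calc p i * p j * (g i - g j) ^ 2
      ≤ p i * p j * ((j - i : ℕ) * ∑ k ∈ Ico i j, (g (k + 1) - g k) ^ 2) := by
        rw [sub_sq_comm]
        exact mul_le_mul_of_nonneg_left (sq_sub_le_mul_sum_Ico_sq g hij)
          (mul_nonneg (hp i hi) (hp j hj))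
    _ = (j - i : ℕ) * ∑ k ∈ Ico i j, p i * p j * (g (k + 1) - g k) ^ 2 := by
        rw [mul_sum, mul_sum, mul_sum]; ring_nf
    _ ≤ K * ∑ k ∈ Ico i j, (p i + p j) * (min (p k) (p (k + 1)) * (g (k + 1) - g k) ^ 2) := by
        refine mul_le_mul (by exact_mod_cast (by omega : j - i ≤ K)) (sum_le_sum fun k hk => ?_)
          (sum_nonneg fun k _ => mul_nonneg (mul_nonneg (hp i hi) (hp j hj)) (sq_nonneg _))
          K.cast_nonneg
        rw [← mul_assoc]
        exact mul_le_mul_of_nonneg_right (mul_le_add_mul_min_of_Ico hp hvalley hj hk) (sq_nonneg _)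
    _ ≤ K * ∑ k ∈ range K, (p i + p j) * (min (p k) (p (k + 1)) * (g (k + 1) - g k) ^ 2) := by
        refine mul_le_mul_of_nonneg_left (sum_le_sum_of_subset_of_nonneg (fun k hk => ?_)
          fun k hk _ => hterm k hk) K.cast_nonneg
        exact mem_range.mpr ((mem_Ico.mp hk).2.trans_le hj)
    _ = _ := by rw [← mul_sum]; ring

theorem sum_mul_sq_sub_sq_le_of_min_le (hp : ∀ i ≤ K, 0 ≤ p i)
    (hsum : ∑ i ∈ range (K + 1), p i = 1)
    (hvalley : ∀ i k j, i ≤ k → k ≤ j → j ≤ K → min (p i) (p j) ≤ p k) :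
    (∑ i ∈ range (K + 1), p i * g i ^ 2) - (∑ i ∈ range (K + 1), p i * g i) ^ 2 ≤
      K * (K + 1) * ∑ k ∈ range K, min (p k) (p (k + 1)) * (g (k + 1) - g k) ^ 2 := by
  set D := ∑ k ∈ range K, min (p k) (p (k + 1)) * (g (k + 1) - g k) ^ 2
  have hpairs : ∑ i ∈ range (K + 1), ∑ j ∈ range (K + 1), p i * p j * (g i - g j) ^ 2 ≤
      ∑ i ∈ range (K + 1), ∑ j ∈ range (K + 1), K * (p i + p j) * D :=
    sum_le_sum fun i hi => sum_le_sum fun j hj =>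
      mul_mul_sub_sq_le_mul_sum_min g hp hvalley (Nat.lt_succ_iff.mp (mem_range.mp hi))
        (Nat.lt_succ_iff.mp (mem_range.mp hj))
  have hcount : ∑ i ∈ range (K + 1), ∑ j ∈ range (K + 1), K * (p i + p j) * D =
      2 * (K * (K + 1) * D) := by
    simp only [mul_assoc, ← mul_sum, ← sum_mul, sum_sum_add_eq _ p hsum, card_range]
    push_cast; ring
  linarith [two_mul_sum_mul_sq_sub_sq_eq (range (K + 1)) p g hsum]

end PathPoincare

noncomputable def foldedSpace (n : ℕ) : Finset ℤ :=
  (Icc 0 (n : ℤ)).filter (fun m => m % 2 = (n : ℤ) % 2)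

def foldedPoint (n k : ℕ) : ℤ := 2 * k + n % 2

theorem foldedPoint_le_foldedPoint {n a b : ℕ} :
    foldedPoint n a ≤ foldedPoint n b ↔ a ≤ b := by
  unfold foldedPoint; omega

theorem foldedPoint_injective (n : ℕ) : Function.Injective (foldedPoint n) := fun a b h => by
  unfold foldedPoint at h; omega

theorem foldedPoint_succ (n k : ℕ) : foldedPoint n (k + 1) = foldedPoint n k + 2 := by
  unfold foldedPoint; push_cast; ring

theorem mem_foldedSpace {n : ℕ} {m : ℤ} :
    m ∈ foldedSpace n ↔ ∃ k ≤ n / 2, foldedPoint n k = m := by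
  simp only [foldedSpace, foldedPoint, mem_filter, mem_Icc]
  constructor
  · rintro ⟨⟨hm0, hmn⟩, hm⟩
    exact ⟨((m - n % 2) / 2).toNat, by omega, by omega⟩
  · rintro ⟨k, hk, rfl⟩
    omega

theorem foldedSpace_eq_image (n : ℕ) :
    foldedSpace n = (range (n / 2 + 1)).image (foldedPoint n) := by
  ext m
  simp only [mem_foldedSpace, mem_image, mem_range, Nat.lt_succ_iff]

theorem foldedPoint_mem_foldedSpace {n k : ℕ} (hk : k ≤ n / 2) :
    foldedPoint n k ∈ foldedSpace n :=
  mem_foldedSpace.mpr ⟨k, hk, rfl⟩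

theorem filter_add_two_mem_foldedSpace (n : ℕ) :
    (foldedSpace n).filter (fun m => m + 2 ∈ foldedSpace n) =
      (range (n / 2)).image (foldedPoint n) := by
  ext m
  simp only [mem_filter, mem_foldedSpace, mem_image, mem_range]
  constructor
  · rintro ⟨⟨k, hk, rfl⟩, l, hl, hkl⟩
    refine ⟨k, ?_, rfl⟩
    rw [← foldedPoint_succ, (foldedPoint_injective n).eq_iff] at hkl
    omega
  · rintro ⟨k, hk, rfl⟩
    exact ⟨⟨k, hk.le, rfl⟩, k + 1, hk, foldedPoint_succ n k⟩

theorem sum_foldedSpace (n : ℕ) (F : ℤ → ℝ) :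
    ∑ m ∈ foldedSpace n, F m = ∑ k ∈ range (n / 2 + 1), F (foldedPoint n k) := by
  rw [foldedSpace_eq_image, sum_image fun a _ b _ h => foldedPoint_injective n h]

theorem sum_filter_add_two_mem_foldedSpace (n : ℕ) (F : ℤ → ℝ) :
    ∑ m ∈ (foldedSpace n).filter (fun m => m + 2 ∈ foldedSpace n), F m =
      ∑ k ∈ range (n / 2), F (foldedPoint n k) := by
  rw [filter_add_two_mem_foldedSpace, sum_image fun a _ b _ h => foldedPoint_injective n h]

theorem sum_mul_sq_sub_sq_foldedSpace_le (n : ℕ) (π : ℤ → ℝ)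
    (hπ : ∀ m ∈ foldedSpace n, 0 ≤ π m) (hπsum : ∑ m ∈ foldedSpace n, π m = 1)
    {mstar : ℤ} (hmstar : mstar ∈ foldedSpace n)
    (hup : ∀ m, m ∈ foldedSpace n → m + 2 ∈ foldedSpace n → m + 2 ≤ mstar →
      π m ≤ π (m + 2))
    (hdown : ∀ m, m ∈ foldedSpace n → m + 2 ∈ foldedSpace n → mstar ≤ m →
      π (m + 2) ≤ π m)
    (f : ℤ → ℝ) :
    (∑ m ∈ foldedSpace n, π m * f m ^ 2) - (∑ m ∈ foldedSpace n, π m * f m) ^ 2 ≤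
      (n / 2 : ℕ) * ((n / 2 : ℕ) + 1) *
        ∑ m ∈ (foldedSpace n).filter (fun m => m + 2 ∈ foldedSpace n),
          min (π m) (π (m + 2)) * (f (m + 2) - f m) ^ 2 := by
  obtain ⟨ks, hks, rfl⟩ := mem_foldedSpace.mp hmstar
  have hmem := @foldedPoint_mem_foldedSpace n
  have hmono : MonotoneOn (fun k => π (foldedPoint n k)) (Set.Iic ks) :=
    monotoneOn_of_le_add_one Set.ordConnected_Iic fun k _ _ hk => by
      have hk : k + 1 ≤ ks := hk
      simpa only [foldedPoint_succ] using hup _ (hmem (by omega))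
        (foldedPoint_succ n k ▸ hmem (by omega))
        (foldedPoint_succ n k ▸ foldedPoint_le_foldedPoint.mpr hk)
  have hanti : AntitoneOn (fun k => π (foldedPoint n k)) (Set.Icc ks (n / 2)) :=
    antitoneOn_of_add_one_le Set.ordConnected_Icc fun k _ hk hk1 => by
      simpa only [foldedPoint_succ] using hdown _ (hmem hk.2)
        (foldedPoint_succ n k ▸ hmem hk1.2) (foldedPoint_le_foldedPoint.mpr hk.1)
  rw [sum_foldedSpace] at hπsum
  rw [sum_foldedSpace, sum_foldedSpace, sum_filter_add_two_mem_foldedSpace]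
  simpa only [foldedPoint_succ] using
    sum_mul_sq_sub_sq_le_of_min_le (fun k => f (foldedPoint n k)) (fun k hk => hπ _ (hmem hk))
      hπsum
    (fun i k j hik hkj hj => min_le_of_monotoneOn_of_antitoneOn hmono hanti hik hkj hj)

theorem div_two_mul_div_two_add_one_le (n : ℕ) :
    ((n / 2 : ℕ) : ℝ) * ((n / 2 : ℕ) + 1) ≤ (n : ℝ) ^ 3 * (1 / (2 * n)) := by
  rcases n.eq_zero_or_pos with rfl | hn
  · simp
  have hK : 2 * (n / 2) * (n / 2 + 1) ≤ n ^ 2 := by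
    calc 2 * (n / 2) * (n / 2 + 1) ≤ n * n := Nat.mul_le_mul (Nat.mul_div_le n 2) (by omega)
      _ = n ^ 2 := (sq n).symm
  have hK' : 2 * ((n / 2 : ℕ) : ℝ) * ((n / 2 : ℕ) + 1) ≤ (n : ℝ) ^ 2 := by
    exact_mod_cast hK
  rw [show (n : ℝ) ^ 3 * (1 / (2 * n)) = n ^ 2 / 2 by field_simp]
  linarith

theorem poincare_folded_birth_death_general (n : ℕ)
    (S : Finset ℤ)
    (hS : S = (Finset.Icc (0 : ℤ) (n : ℤ)).filter (fun m => m % 2 = (n : ℤ) % 2))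
    (π : ℤ → ℝ) (hπpos : ∀ m ∈ S, 0 < π m) (hπsum : ∑ m ∈ S, π m = 1)
    (mstar : ℤ) (hmstar : mstar ∈ S)
    (hup : ∀ m, m ∈ S → m + 2 ∈ S → m + 2 ≤ mstar → π m ≤ π (m + 2))
    (hdown : ∀ m, m ∈ S → m + 2 ∈ S → mstar ≤ m → π (m + 2) ≤ π m)
    (c : ℤ → ℝ)
    (hc : ∀ m, m ∈ S → m + 2 ∈ S →
      (1 / (2 * n)) * min (π m) (π (m + 2)) ≤ c m)
    (f : ℤ → ℝ) :
    (∑ m ∈ S, π m * f m ^ 2) - (∑ m ∈ S, π m * f m) ^ 2 ≤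
      (n : ℝ) ^ 3 * ∑ m ∈ S.filter (fun m => m + 2 ∈ S),
        c m * (f (m + 2) - f m) ^ 2 := by
  obtain rfl : S = foldedSpace n := hS
  have hedge_nonneg : ∀ m ∈ (foldedSpace n).filter (fun m => m + 2 ∈ foldedSpace n),
      0 ≤ min (π m) (π (m + 2)) * (f (m + 2) - f m) ^ 2 := fun m hm =>
    have ⟨hm, hm2⟩ := mem_filter.mp hm
    mul_nonneg (le_min (hπpos m hm).le (hπpos _ hm2).le) (sq_nonneg _)
  calc _ ≤ (n / 2 : ℕ) * ((n / 2 : ℕ) + 1) *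
        ∑ m ∈ (foldedSpace n).filter (fun m => m + 2 ∈ foldedSpace n),
          min (π m) (π (m + 2)) * (f (m + 2) - f m) ^ 2 :=
        sum_mul_sq_sub_sq_foldedSpace_le n π (fun m hm => (hπpos m hm).le) hπsum hmstar hup
          hdown f
    _ ≤ (n : ℝ) ^ 3 * (1 / (2 * n)) *
        ∑ m ∈ (foldedSpace n).filter (fun m => m + 2 ∈ foldedSpace n),
          min (π m) (π (m + 2)) * (f (m + 2) - f m) ^ 2 :=
        mul_le_mul_of_nonneg_right (div_two_mul_div_two_add_one_le n) (sum_nonneg hedge_nonneg)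
    _ ≤ _ := by
        rw [mul_assoc, mul_sum]
        refine mul_le_mul_of_nonneg_left (sum_le_sum fun m hm => ?_) (by positivity)
        obtain ⟨hm, hm2⟩ := mem_filter.mp hm
        rw [← mul_assoc]
        exact mul_le_mul_of_nonneg_right (hc m hm hm2) (sq_nonneg _)

/-- Poincaré inequality with constant `n³` for a unimodal birth–death chain on the
folded magnetization space `{0 ≤ m ≤ n, m ≡ n (mod 2)}` with capacities bounded
below by `(1/(2n))·min(π(m), π(m+2))`. -/
theorem poincare_folded_birth_death (n : ℕ) (hn : 1 ≤ n)
    (S : Finset ℤ)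
    (hS : S = (Finset.Icc (0 : ℤ) (n : ℤ)).filter (fun m => m % 2 = (n : ℤ) % 2))
    (π : ℤ → ℝ) (hπpos : ∀ m ∈ S, 0 < π m) (hπsum : ∑ m ∈ S, π m = 1)
    (mstar : ℤ) (hmstar : mstar ∈ S)
    (hup : ∀ m, m ∈ S → m + 2 ∈ S → m + 2 ≤ mstar → π m ≤ π (m + 2))
    (hdown : ∀ m, m ∈ S → m + 2 ∈ S → mstar ≤ m → π (m + 2) ≤ π m)
    (c : ℤ → ℝ)
    (hc : ∀ m, m ∈ S → m + 2 ∈ S →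
      (1 / (2 * n)) * min (π m) (π (m + 2)) ≤ c m)
    (f : ℤ → ℝ) :
    (∑ m ∈ S, π m * f m ^ 2) - (∑ m ∈ S, π m * f m) ^ 2 ≤
      (n : ℝ) ^ 3 * ∑ m ∈ S.filter (fun m => m + 2 ∈ S),
        c m * (f (m + 2) - f m) ^ 2 :=
  poincare_folded_birth_death_general n S hS π hπpos hπsum mstar hmstar hup hdown c hc f
end
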